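/- arXiv:2408.05046 — 2 statements merged into one kernel-verified Lean document; each statement's English description precedes it below -/
import Mathlib

section
/- Let Z be a non-degenerate multimatroid with a total order ≺ on its skew classes and define the equivalence relation B ∼ B' on bases by: act_≺(B) = act_≺(B') and B, B' agree on every inactive skew class. Then for every basis B, the equivalence class [B] has cardinality ∏_{ω ∈ act_≺(B)} (|ω| − 1). -/
open Finset
open scoped Classical

variable {U ι : Type}

section Defs
variable [DecidableEq U] [Fintype U] [DecidableEq ι] [Fintype ι]

/-- `S` is a subtransversal: it meets each skew class at most once.
Skew classes are the fibers of `cls : U → ι`. -/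
def Subtransversal (cls : U → ι) (S : Finset U) : Prop :=
  Set.InjOn cls ↑S

/-- The skew class with index `i`, as a finset. -/
def skewClass (cls : U → ι) (i : ι) : Finset U :=
  Finset.univ.filter (fun x => cls x = i)

/-- `T` is a transversal: it meets each skew class exactly once. -/
def Transversal (cls : U → ι) (T : Finset U) : Prop :=
  Subtransversal cls T ∧ ∀ i : ι, ∃ x ∈ T, cls x = i

/-- The multimatroid rank axioms for a rank function `r` on the carrier given by
`cls : U → ι` (whose fibers, assumed nonempty, are the skew classes).
The first three fields express axiom (R1) (each transversal carries a matroid),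
and `axiomR2` is axiom (R2). -/
structure IsMultimatroid (cls : U → ι) (r : Finset U → ℕ) : Prop where
  cls_surj : Function.Surjective cls
  rank_le_card : ∀ S, Subtransversal cls S → r S ≤ S.card
  mono : ∀ S T, Subtransversal cls T → S ⊆ T → r S ≤ r T
  submod : ∀ S T, Subtransversal cls (S ∪ T) → r (S ∪ T) + r (S ∩ T) ≤ r S + r T
  axiomR2 : ∀ S, ∀ x y : U, Subtransversal cls S → cls x = cls y → x ≠ y →
    (∀ u ∈ S, cls u ≠ cls x) →
    2 * r S + 1 ≤ r (insert x S) + r (insert y S)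

/-- An independent set of the multimatroid. -/
def Indep (cls : U → ι) (r : Finset U → ℕ) (S : Finset U) : Prop :=
  Subtransversal cls S ∧ r S = S.card

/-- A basis: a maximal independent subtransversal. -/
def MMBasis (cls : U → ι) (r : Finset U → ℕ) (B : Finset U) : Prop :=
  Indep cls r B ∧ ∀ S, Indep cls r S → B ⊆ S → S = B

/-- A circuit: a minimal dependent subtransversal. -/
def Circuit (cls : U → ι) (r : Finset U → ℕ) (C : Finset U) : Prop :=
  Subtransversal cls C ∧ r C < C.card ∧ ∀ D ⊂ C, ¬ r D < D.card

/-- Non-degenerate: every skew class has at least two elements. -/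
def Nondegenerate (cls : U → ι) : Prop :=
  ∀ i : ι, 2 ≤ (skewClass cls i).card

/-- An element is singular if its singleton has rank `0`. -/
def Singular (r : Finset U → ℕ) (e : U) : Prop := r {e} = 0

end Defs

section Order
variable [DecidableEq U] [Fintype U] [DecidableEq ι] [Fintype ι] [LinearOrder ι]

/-- The skew class `i` is active with respect to the transversal `T` (in
particular, with respect to a basis): there is a circuit `C` with
`C − ω_i ⊆ T` whose `≺`-least element lies in the class `i`. -/
def Active (cls : U → ι) (r : Finset U → ℕ) (T : Finset U) (i : ι) : Prop :=
  ∃ C, Circuit cls r C ∧ C \ skewClass cls i ⊆ T ∧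
    ∃ m ∈ C, cls m = i ∧ ∀ x ∈ C, i ≤ cls x

end Order

/-! ### Auxiliary lemmas -/

section Aux
variable [DecidableEq U] [Fintype U] [DecidableEq ι] [Fintype ι]
variable {cls : U → ι} {r : Finset U → ℕ}
set_option linter.unusedSectionVars false

lemma subtrans_mono {S T : Finset U} (hT : Subtransversal cls T) (hST : S ⊆ T) :
    Subtransversal cls S :=
  hT.mono (by exact_mod_cast hST)

lemma subtrans_insert {S : Finset U} (hS : Subtransversal cls S) {x : U}
    (hx : ∀ u ∈ S, cls u ≠ cls x) : Subtransversal cls (insert x S) := by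
  intro a ha b hb hab
  simp only [coe_insert, Set.mem_insert_iff, mem_coe] at ha hb
  rcases ha with rfl | ha
  · rcases hb with rfl | hb
    · rfl
    · exact absurd hab.symm (hx b hb)
  · rcases hb with rfl | hb
    · exact absurd hab (hx a ha)
    · exact hS ha hb hab

variable (hM : IsMultimatroid cls r)
include hM

lemma r_insert_le (S : Finset U) (x : U) (h : Subtransversal cls (insert x S)) :
    r (insert x S) ≤ r S + 1 := by
  have h1 := hM.submod S {x} (by rwa [union_comm, ← insert_eq])
  have h2 : r {x} ≤ 1 := by
    have := hM.rank_le_card {x} (subtrans_mono h (by simp))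
    simpa using this
  rw [union_comm, ← insert_eq] at h1
  omega

lemma r_le_add_sdiff {S T : Finset U} (hT : Subtransversal cls T) (hST : S ⊆ T) :
    r T ≤ r S + (T \ S).card := by
  classical
  suffices H : ∀ n (S : Finset U), S ⊆ T → (T \ S).card = n → r T ≤ r S + (T \ S).card by
    exact H _ S hST rfl
  intro n
  induction n with
  | zero =>
    intro S hST hn
    have : T = S := by
      have : T \ S = ∅ := Finset.card_eq_zero.mp hn
      have hsub : T ⊆ S := by
        intro x hx
        by_contra hxS
        exact absurd (Finset.mem_sdiff.mpr ⟨hx, hxS⟩) (by simp [this])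
      exact Finset.Subset.antisymm hsub hST
    simp [this]
  | succ n ih =>
    intro S hST hn
    obtain ⟨a, ha⟩ : (T \ S).Nonempty := by
      rw [← Finset.card_pos, hn]; omega
    rw [Finset.mem_sdiff] at ha
    have hins : insert a S ⊆ T := Finset.insert_subset ha.1 hST
    have hcard : (T \ insert a S).card = n := by
      have : T \ insert a S = (T \ S).erase a := by
        ext x; simp [Finset.mem_sdiff, Finset.mem_erase, Finset.mem_insert]
        tauto
      rw [this, Finset.card_erase_of_mem (Finset.mem_sdiff.mpr ha), hn]
      omega
    have h1 := ih _ hins hcard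
    have h2 := r_insert_le hM S a (subtrans_mono hT hins)
    have h3 : (T \ S).card = n + 1 := hn
    rw [hcard] at h1
    omega

lemma indep_subset {S T : Finset U} (hT : Indep cls r T) (hST : S ⊆ T) :
    Indep cls r S := by
  have hsT := hT.1
  have hsS := subtrans_mono hsT hST
  refine ⟨hsS, le_antisymm (hM.rank_le_card S hsS) ?_⟩
  have h1 := r_le_add_sdiff hM hsT hST
  have h2 : (T \ S).card = T.card - S.card := by
    rw [Finset.card_sdiff_of_subset hST]
  have h3 := Finset.card_le_card hST
  rw [hT.2] at h1
  omega

lemma dep_superset {S T : Finset U} (hT : Subtransversal cls T) (hST : S ⊆ T)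
    (hS : r S < S.card) : r T < T.card := by
  by_contra h
  push_neg at h
  have : Indep cls r T := ⟨hT, le_antisymm (hM.rank_le_card T hT) h⟩
  have := (indep_subset hM this hST).2
  omega

lemma exists_circuit {S : Finset U} (hS : Subtransversal cls S) (hdep : r S < S.card) :
    ∃ C ⊆ S, Circuit cls r C := by
  classical
  obtain ⟨C, hC, hmin⟩ := Finset.exists_min_image
    ((S.powerset).filter (fun D => r D < D.card)) Finset.card
    ⟨S, by simp [hdep]⟩
  simp only [Finset.mem_filter, Finset.mem_powerset] at hC
  refine ⟨C, hC.1, subtrans_mono hS hC.1, hC.2, ?_⟩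
  intro D hD hrD
  have := hmin D (by
    simp only [Finset.mem_filter, Finset.mem_powerset]
    exact ⟨hD.subset.trans hC.1, hrD⟩)
  have := Finset.card_lt_card hD
  omega

lemma circuit_not_indep {C S : Finset U} (hC : Circuit cls r C) (hS : Indep cls r S)
    (h : C ⊆ S) : False := by
  have := (indep_subset hM hS h).2
  have := hC.2.1
  omega

end Aux

section Aux2
variable [DecidableEq U] [Fintype U] [DecidableEq ι] [Fintype ι]
variable {cls : U → ι} {r : Finset U → ℕ}
set_option linter.unusedSectionVars false

/-- independent transversals are bases -/
lemma indep_transversal_basis (hT : Transversal cls T) (hI : Indep cls r T) :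
    MMBasis cls r T := by
  refine ⟨hI, fun S hS hTS => ?_⟩
  apply Finset.Subset.antisymm _ hTS
  intro x hx
  obtain ⟨y, hy, hyc⟩ := hT.2 (cls x)
  have : y = x := hS.1 (by exact_mod_cast hTS hy) (by exact_mod_cast hx) hyc
  rwa [← this]

variable (hM : IsMultimatroid cls r) (hnd : Nondegenerate cls)
include hM

/-- bases of a nondegenerate multimatroid are transversals -/
lemma basis_transversal (hnd : Nondegenerate cls) {B : Finset U} (hB : MMBasis cls r B) :
    Transversal cls B := by
  refine ⟨hB.1.1, fun i => ?_⟩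
  by_contra h
  push_neg at h
  have hfree : ∀ u ∈ B, cls u ≠ i := fun u hu hc => h u hu hc
  -- pick two distinct elements of skew class i
  have h2 := hnd i
  obtain ⟨x, hx, y, hy, hxy⟩ : ∃ x ∈ skewClass cls i, ∃ y ∈ skewClass cls i, x ≠ y := by
    obtain ⟨x, hx⟩ : (skewClass cls i).Nonempty := Finset.card_pos.mp (by omega)
    obtain ⟨y, hy, hyx⟩ := Finset.exists_mem_ne (s := skewClass cls i) (by omega) x
    exact ⟨x, hx, y, hy, hyx.symm⟩
  simp only [skewClass, Finset.mem_filter] at hx hy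
  have hclsx : cls x = i := hx.2
  have hclsy : cls y = i := hy.2
  have hR2 := hM.axiomR2 B x y hB.1.1 (by rw [hclsx, hclsy]) hxy
    (fun u hu => by rw [hclsx]; exact hfree u hu)
  have hsx : Subtransversal cls (insert x B) :=
    subtrans_insert hB.1.1 (fun u hu => by rw [hclsx]; exact hfree u hu)
  have hsy : Subtransversal cls (insert y B) :=
    subtrans_insert hB.1.1 (fun u hu => by rw [hclsy]; exact hfree u hu)
  have hxB : x ∉ B := fun hc => hfree x hc hclsx
  have hyB : y ∉ B := fun hc => hfree y hc hclsy
  have hcx : (insert x B).card = B.card + 1 := Finset.card_insert_of_notMem hxB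
  have hcy : (insert y B).card = B.card + 1 := Finset.card_insert_of_notMem hyB
  have hlx := hM.rank_le_card _ hsx
  have hly := hM.rank_le_card _ hsy
  rw [hB.1.2] at hR2
  -- one of the two insertions is independent
  have : r (insert x B) = (insert x B).card ∨ r (insert y B) = (insert y B).card := by
    omega
  rcases this with h' | h'
  · have := hB.2 (insert x B) ⟨hsx, h'⟩ (Finset.subset_insert _ _)
    exact hxB (by rw [← this]; exact Finset.mem_insert_self _ _)
  · have := hB.2 (insert y B) ⟨hsy, h'⟩ (Finset.subset_insert _ _)
    exact hyB (by rw [← this]; exact Finset.mem_insert_self _ _)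

/-- at most one element of a skew class extends an independent set to a dependent set -/
lemma dep_ext_unique {I : Finset U} (hI : Indep cls r I) {x y : U}
    (hfree : ∀ u ∈ I, cls u ≠ cls x) (hxy : cls x = cls y) (hne : x ≠ y)
    (hdx : r (insert x I) < (insert x I).card)
    (hdy : r (insert y I) < (insert y I).card) : False := by
  have hR2 := hM.axiomR2 I x y hI.1 hxy hne hfree
  have hxI : x ∉ I := fun hc => hfree x hc rfl
  have hyI : y ∉ I := fun hc => hfree y hc (by rw [hxy])
  rw [Finset.card_insert_of_notMem hxI] at hdx
  rw [Finset.card_insert_of_notMem hyI] at hdy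
  rw [hI.2] at hR2
  omega

/-- a set of nullity one contains a unique circuit -/
lemma circuit_unique {I : Finset U} (hI : Indep cls r I) {z : U}
    (hs : Subtransversal cls (insert z I))
    {C₁ C₂ : Finset U} (h1 : Circuit cls r C₁) (h2 : Circuit cls r C₂)
    (hC1 : C₁ ⊆ insert z I) (hC2 : C₂ ⊆ insert z I) : C₁ = C₂ := by
  by_contra hne
  -- both circuits contain z
  have hz1 : z ∈ C₁ := by
    by_contra hz
    exact circuit_not_indep hM h1 hI (fun u hu => by
      rcases Finset.mem_insert.mp (hC1 hu) with rfl | h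
      · exact absurd hu hz
      · exact h)
  have hz2 : z ∈ C₂ := by
    by_contra hz
    exact circuit_not_indep hM h2 hI (fun u hu => by
      rcases Finset.mem_insert.mp (hC2 hu) with rfl | h
      · exact absurd hu hz
      · exact h)
  -- intersection is independent
  have hint : r (C₁ ∩ C₂) = (C₁ ∩ C₂).card := by
    have hsub : C₁ ∩ C₂ ⊆ C₁ := Finset.inter_subset_left
    have hproper : C₁ ∩ C₂ ⊂ C₁ ∨ C₁ ∩ C₂ ⊂ C₂ := by
      rcases hsub.eq_or_ssubset with h | h
      · right
        refine Finset.ssubset_iff_subset_ne.mpr ⟨Finset.inter_subset_right, ?_⟩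
        intro hc
        exact hne (h.symm.trans hc)
      · left; exact h
    have hle := hM.rank_le_card (C₁ ∩ C₂) (subtrans_mono h1.1 Finset.inter_subset_left)
    rcases hproper with h | h
    · have := h1.2.2 _ h; omega
    · have := h2.2.2 _ h; omega
  have hsu : Subtransversal cls (C₁ ∪ C₂) :=
    subtrans_mono hs (Finset.union_subset hC1 hC2)
  have hsmod := hM.submod C₁ C₂ hsu
  -- rank of union at least card - 1
  have hub : (C₁ ∪ C₂) \ {z} ⊆ I := by
    intro u hu
    rw [Finset.mem_sdiff, Finset.mem_union] at hu
    have hz : u ≠ z := by simpa using hu.2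
    rcases hu.1 with h | h
    · rcases Finset.mem_insert.mp (hC1 h) with rfl | h'
      · exact absurd rfl hz
      · exact h'
    · rcases Finset.mem_insert.mp (hC2 h) with rfl | h'
      · exact absurd rfl hz
      · exact h'
  have hrge : (C₁ ∪ C₂).card - 1 ≤ r (C₁ ∪ C₂) := by
    have h1' : r ((C₁ ∪ C₂) \ {z}) = ((C₁ ∪ C₂) \ {z}).card :=
      (indep_subset hM hI hub).2
    have h2' := hM.mono ((C₁ ∪ C₂) \ {z}) (C₁ ∪ C₂) hsu (Finset.sdiff_subset)
    have h3' : ((C₁ ∪ C₂) \ {z}).card = (C₁ ∪ C₂).card - 1 := by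
      rw [Finset.sdiff_singleton_eq_erase, Finset.card_erase_of_mem
        (Finset.mem_union.mpr (Or.inl hz1))]
    omega
  have hcu : (C₁ ∪ C₂).card + (C₁ ∩ C₂).card = C₁.card + C₂.card :=
    Finset.card_union_add_card_inter _ _
  have e1 := h1.2.1
  have e2 := h2.2.1
  have hc1pos : 0 < C₁.card := Finset.card_pos.mpr ⟨z, hz1⟩
  omega

end Aux2

section Aux3
variable [DecidableEq U] [Fintype U] [DecidableEq ι] [Fintype ι] [Nonempty U]
variable {cls : U → ι} {r : Finset U → ℕ}
set_option linter.unusedSectionVars false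

/-- the unique element of a transversal in a given skew class -/
noncomputable def Bv (cls : U → ι) (B : Finset U) (i : ι) : U :=
  if h : ∃ x, x ∈ B ∧ cls x = i then h.choose else Classical.arbitrary U

lemma Bv_mem {B : Finset U} (hT : Transversal cls B) (i : ι) : Bv cls B i ∈ B := by
  obtain ⟨x, hx, hc⟩ := hT.2 i
  rw [Bv, dif_pos ⟨x, hx, hc⟩]
  exact (Exists.choose_spec (⟨x, hx, hc⟩ : ∃ x, x ∈ B ∧ cls x = i)).1

lemma Bv_cls {B : Finset U} (hT : Transversal cls B) (i : ι) : cls (Bv cls B i) = i := by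
  obtain ⟨x, hx, hc⟩ := hT.2 i
  rw [Bv, dif_pos ⟨x, hx, hc⟩]
  exact (Exists.choose_spec (⟨x, hx, hc⟩ : ∃ x, x ∈ B ∧ cls x = i)).2

lemma Bv_eq {B : Finset U} (hT : Transversal cls B) {i : ι} {x : U}
    (hx : x ∈ B) (hc : cls x = i) : x = Bv cls B i :=
  hT.1 (by exact_mod_cast hx) (by exact_mod_cast Bv_mem hT i)
    (by rw [hc, Bv_cls hT])

lemma transversal_ext {B₁ B₂ : Finset U} (h1 : Transversal cls B₁) (h2 : Transversal cls B₂)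
    (h : ∀ i, Bv cls B₁ i = Bv cls B₂ i) : B₁ = B₂ := by
  ext x
  constructor
  · intro hx
    have := Bv_eq h1 hx rfl
    rw [this, h (cls x)]
    exact Bv_mem h2 _
  · intro hx
    have := Bv_eq h2 hx rfl
    rw [this, ← h (cls x)]
    exact Bv_mem h1 _

lemma erase_free {B : Finset U} (hT : Transversal cls B) {j : ι} {u : U}
    (hu : u ∈ B.erase (Bv cls B j)) : cls u ≠ j := by
  intro hc
  have := Bv_eq hT (Finset.mem_of_mem_erase hu) hc
  exact (Finset.mem_erase.mp hu).1 this

lemma subtrans_insert_erase {B : Finset U} (hT : Transversal cls B) {j : ι} {z : U}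
    (hz : cls z = j) : Subtransversal cls (insert z (B.erase (Bv cls B j))) :=
  subtrans_insert (subtrans_mono hT.1 (Finset.erase_subset _ _))
    (fun u hu => by rw [hz]; exact erase_free hT hu)

end Aux3

section Aux4
variable [DecidableEq U] [Fintype U] [DecidableEq ι] [Fintype ι] [LinearOrder ι] [Nonempty U]
variable {cls : U → ι} {r : Finset U → ℕ}
set_option linter.unusedSectionVars false

/-- Activity witness: `z` is the forbidden element of class `j` w.r.t. basis `B`,
as witnessed by circuit `C` whose minimum class is `j`. -/
def AW (cls : U → ι) (r : Finset U → ℕ) (B : Finset U) (j : ι) (z : U) (C : Finset U) : Prop :=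
  cls z = j ∧ z ∉ B ∧ Circuit cls r C ∧ C ⊆ insert z (B.erase (Bv cls B j)) ∧
    ∀ u ∈ C, j ≤ cls u

variable (hM : IsMultimatroid cls r)
include hM

lemma AW_mem {B : Finset U} (hB : Indep cls r B) {j : ι} {z : U} {C : Finset U}
    (h : AW cls r B j z C) : z ∈ C := by
  by_contra hz
  refine circuit_not_indep hM h.2.2.1 hB (fun u hu => ?_)
  rcases Finset.mem_insert.mp (h.2.2.2.1 hu) with rfl | h'
  · exact absurd hu hz
  · exact Finset.mem_of_mem_erase h'

lemma AW_dep {B : Finset U} (hB : MMBasis cls r B) (hT : Transversal cls B)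
    {j : ι} {z : U} {C : Finset U} (h : AW cls r B j z C) :
    r (insert z (B.erase (Bv cls B j))) < (insert z (B.erase (Bv cls B j))).card :=
  dep_superset hM (subtrans_insert_erase hT h.1) h.2.2.2.1 h.2.2.1.2.1

lemma AW_unique_z {B : Finset U} (hB : MMBasis cls r B) (hT : Transversal cls B)
    {j : ι} {z₁ z₂ : U} {C₁ C₂ : Finset U}
    (h1 : AW cls r B j z₁ C₁) (h2 : AW cls r B j z₂ C₂) : z₁ = z₂ := by
  by_contra hne
  have hIe : Indep cls r (B.erase (Bv cls B j)) :=
    indep_subset hM hB.1 (Finset.erase_subset _ _)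
  exact dep_ext_unique hM hIe
    (fun u hu => by rw [h1.1]; exact erase_free hT hu)
    (by rw [h1.1, h2.1]) hne (AW_dep hM hB hT h1) (AW_dep hM hB hT h2)

lemma AW_unique_C {B : Finset U} (hB : MMBasis cls r B) (hT : Transversal cls B)
    {j : ι} {z₁ z₂ : U} {C₁ C₂ : Finset U}
    (h1 : AW cls r B j z₁ C₁) (h2 : AW cls r B j z₂ C₂) : C₁ = C₂ := by
  have hz := AW_unique_z hM hB hT h1 h2
  subst hz
  have hIe : Indep cls r (B.erase (Bv cls B j)) :=
    indep_subset hM hB.1 (Finset.erase_subset _ _)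
  exact circuit_unique hM hIe (subtrans_insert_erase hT h1.1)
    h1.2.2.1 h2.2.2.1 h1.2.2.2.1 h2.2.2.2.1

lemma active_iff_AW {B : Finset U} (hB : MMBasis cls r B) (hT : Transversal cls B) (j : ι) :
    Active cls r B j ↔ ∃ z C, AW cls r B j z C := by
  constructor
  · rintro ⟨C, hC, hsub, m, hm, hmc, hmin⟩
    have hmB : m ∉ B := by
      intro hmB
      refine circuit_not_indep hM hC hB.1 (fun u hu => ?_)
      by_cases hcu : cls u = j
      · have : u = m := hC.1 (by exact_mod_cast hu) (by exact_mod_cast hm) (by rw [hcu, hmc])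
        rwa [this]
      · exact hsub (Finset.mem_sdiff.mpr ⟨hu, by simp [skewClass, hcu]⟩)
    refine ⟨m, C, hmc, hmB, hC, fun u hu => ?_, hmin⟩
    by_cases hcu : cls u = j
    · have : u = m := hC.1 (by exact_mod_cast hu) (by exact_mod_cast hm) (by rw [hcu, hmc])
      rw [this]; exact Finset.mem_insert_self _ _
    · have huB : u ∈ B := hsub (Finset.mem_sdiff.mpr ⟨hu, by simp [skewClass, hcu]⟩)
      refine Finset.mem_insert_of_mem (Finset.mem_erase.mpr ⟨?_, huB⟩)
      intro he
      exact hcu (by rw [he, Bv_cls hT])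
  · rintro ⟨z, C, hz, hzB, hC, hsub, hmin⟩
    refine ⟨C, hC, fun u hu => ?_, z, AW_mem hM hB.1 ⟨hz, hzB, hC, hsub, hmin⟩, hz, hmin⟩
    rw [Finset.mem_sdiff] at hu
    have hcu : cls u ≠ j := by
      intro hc; exact hu.2 (by simp [skewClass, hc])
    rcases Finset.mem_insert.mp (hsub hu.1) with rfl | h'
    · exact absurd hz hcu
    · exact Finset.mem_of_mem_erase h'

end Aux4

section Swap
variable [DecidableEq U] [Fintype U] [DecidableEq ι] [Fintype ι] [LinearOrder ι] [Nonempty U]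
variable {cls : U → ι} {r : Finset U → ℕ}
set_option linter.unusedSectionVars false

variable (hM : IsMultimatroid cls r)
variable {B : Finset U} (hB : MMBasis cls r B) (hT : Transversal cls B)
variable {i : ι} {z : U} {C : Finset U} (hAW : AW cls r B i z C)
variable {x : U} (hx : cls x = i) (hxB : x ∉ B) (hxz : x ≠ z)

include hM hB hT hAW hx hxB hxz

lemma swap_transversal : Transversal cls (insert x (B.erase (Bv cls B i))) := by
  constructor
  · exact subtrans_insert_erase hT hx
  · intro k
    by_cases hk : k = i
    · exact ⟨x, Finset.mem_insert_self _ _, by rw [hx, hk]⟩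
    · refine ⟨Bv cls B k, Finset.mem_insert_of_mem (Finset.mem_erase.mpr ⟨?_, Bv_mem hT k⟩),
        Bv_cls hT k⟩
      intro hc
      exact hk (by rw [← Bv_cls hT k, hc, Bv_cls hT i])

lemma swap_basis : MMBasis cls r (insert x (B.erase (Bv cls B i))) := by
  refine indep_transversal_basis (swap_transversal hM hB hT hAW hx hxB hxz) ?_
  refine ⟨subtrans_insert_erase hT hx, ?_⟩
  by_contra hne
  have hle := hM.rank_le_card _ (subtrans_insert_erase hT hx)
  have hdep : r (insert x (B.erase (Bv cls B i))) < (insert x (B.erase (Bv cls B i))).card := by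
    omega
  have hIe : Indep cls r (B.erase (Bv cls B i)) :=
    indep_subset hM hB.1 (Finset.erase_subset _ _)
  exact dep_ext_unique hM hIe
    (fun u hu => by rw [hx]; exact erase_free hT hu)
    (by rw [hx, hAW.1]) hxz hdep (AW_dep hM hB hT hAW)

lemma swap_Bv_self : Bv cls (insert x (B.erase (Bv cls B i))) i = x :=
  (Bv_eq (swap_transversal hM hB hT hAW hx hxB hxz) (Finset.mem_insert_self _ _) hx).symm

lemma swap_mem_iff {y : U} (hy : cls y ≠ i) :
    (y ∈ B ↔ y ∈ insert x (B.erase (Bv cls B i))) := by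
  constructor
  · intro h
    refine Finset.mem_insert_of_mem (Finset.mem_erase.mpr ⟨?_, h⟩)
    intro hc
    exact hy (by rw [hc, Bv_cls hT])
  · intro h
    rcases Finset.mem_insert.mp h with rfl | h'
    · exact absurd hx hy
    · exact Finset.mem_of_mem_erase h'

lemma swap_Bv_ne {j : ι} (hj : j ≠ i) :
    Bv cls (insert x (B.erase (Bv cls B i))) j = Bv cls B j := by
  refine (Bv_eq (swap_transversal hM hB hT hAW hx hxB hxz) ?_ (Bv_cls hT j)).symm
  rw [← swap_mem_iff hM hB hT hAW hx hxB hxz (by rw [Bv_cls hT j]; exact hj)]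
  exact Bv_mem hT j

lemma swap_erase_eq :
    (insert x (B.erase (Bv cls B i))).erase
      (Bv cls (insert x (B.erase (Bv cls B i))) i) = B.erase (Bv cls B i) := by
  rw [swap_Bv_self hM hB hT hAW hx hxB hxz]
  exact Finset.erase_insert (fun hc => hxB (Finset.mem_of_mem_erase hc))

lemma swap_AW_self : AW cls r (insert x (B.erase (Bv cls B i))) i z C := by
  refine ⟨hAW.1, ?_, hAW.2.2.1, ?_, hAW.2.2.2.2⟩
  · intro hc
    rcases Finset.mem_insert.mp hc with h | h
    · exact hxz h.symm
    · exact hAW.2.1 (Finset.mem_of_mem_erase h)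
  · rw [swap_erase_eq hM hB hT hAW hx hxB hxz]
    exact hAW.2.2.2.1

/-- the key exchange lemma: swapping the element of an active class keeps all
activity witnesses (same forbidden elements) -/
lemma swap_AW (j : ι) (z' : U) (C' : Finset U) (h' : AW cls r B j z' C') :
    ∃ C'', AW cls r (insert x (B.erase (Bv cls B i))) j z' C'' := by
  set B₂ := insert x (B.erase (Bv cls B i)) with hB₂
  have hT₂ : Transversal cls B₂ := swap_transversal hM hB hT hAW hx hxB hxz
  have hBas₂ : MMBasis cls r B₂ := swap_basis hM hB hT hAW hx hxB hxz
  by_cases hj : j = i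
  · subst hj
    have := AW_unique_z hM hB hT h' hAW
    subst this
    exact ⟨C, swap_AW_self hM hB hT hAW hx hxB hxz⟩
  -- j ≠ i
  have hBvj : Bv cls B₂ j = Bv cls B j := swap_Bv_ne hM hB hT hAW hx hxB hxz hj
  have hz'x : z' ≠ x := by
    intro hc
    exact hj (by rw [← h'.1, hc, hx])
  have hz'B₂ : z' ∉ B₂ := by
    intro hc
    rcases Finset.mem_insert.mp hc with h | h
    · exact hz'x h
    · exact h'.2.1 (Finset.mem_of_mem_erase h)
  by_cases hBvi : Bv cls B i ∈ C'
  · -- hard case: j < i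
    have hij : j < i := by
      have h1 := h'.2.2.2.2 _ hBvi
      rw [Bv_cls hT i] at h1
      exact lt_of_le_of_ne h1 hj
    set E := B.erase (Bv cls B i) with hE
    have hBvjE : Bv cls B j ∈ E := by
      refine Finset.mem_erase.mpr ⟨?_, Bv_mem hT j⟩
      intro hc
      exact hj (by rw [← Bv_cls hT j, hc, Bv_cls hT i])
    have hEnoi : ∀ u ∈ E, cls u ≠ i := fun u hu => erase_free hT hu
    have hEj : E.erase (Bv cls B j) ⊆ B.erase (Bv cls B j) :=
      Finset.erase_subset_erase _ (Finset.erase_subset _ _)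
    have hEnoj : ∀ u ∈ E.erase (Bv cls B j), cls u ≠ j := fun u hu =>
      erase_free hT (hEj hu)
    have hT2eq : B₂.erase (Bv cls B₂ j) = insert x (E.erase (Bv cls B j)) := by
      rw [hBvj, hB₂]
      rw [Finset.erase_insert_of_ne (by
        intro hc
        exact hj (by rw [← Bv_cls hT j, ← hc, hx]))]
    set T₂ := insert z' (B₂.erase (Bv cls B₂ j)) with hT₂def
    have hsT₂ : Subtransversal cls T₂ := subtrans_insert_erase hT₂ h'.1
    have hC'sub := h'.2.2.2.1
    have hCsub : C ⊆ insert z E := hAW.2.2.2.1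
    have hCge : ∀ u ∈ C, i ≤ cls u := hAW.2.2.2.2
    have hC'ge : ∀ u ∈ C', j ≤ cls u := h'.2.2.2.2
    have hzBvi : z ≠ Bv cls B i := fun hc => hAW.2.1 (hc ▸ Bv_mem hT i)
    have hCsub' : C ⊆ insert z (E.erase (Bv cls B j)) := by
      intro u hu
      rcases Finset.mem_insert.mp (hCsub hu) with rfl | h
      · exact Finset.mem_insert_self _ _
      · refine Finset.mem_insert_of_mem (Finset.mem_erase.mpr ⟨?_, h⟩)
        intro hc
        have h2 := hCge u hu
        rw [hc, Bv_cls hT j] at h2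
        exact absurd h2 (not_le.mpr hij)
    set Q := insert z' (E.erase (Bv cls B j)) with hQ
    have hQbig : Q ⊆ insert z' (B.erase (Bv cls B j)) :=
      Finset.insert_subset_insert _ hEj
    have hBviBj : Bv cls B i ∈ B.erase (Bv cls B j) := by
      refine Finset.mem_erase.mpr ⟨?_, Bv_mem hT i⟩
      intro hc
      exact hj (by rw [← Bv_cls hT j, ← hc, Bv_cls hT i])
    have hsBj : Subtransversal cls (insert z' (B.erase (Bv cls B j))) :=
      subtrans_insert_erase hT h'.1
    have hsQi : insert (Bv cls B i) Q ⊆ insert z' (B.erase (Bv cls B j)) := by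
      refine Finset.insert_subset ?_ hQbig
      exact Finset.mem_insert_of_mem hBviBj
    have hsQis : Subtransversal cls (insert (Bv cls B i) Q) := subtrans_mono hsBj hsQi
    have hsQz : Subtransversal cls (insert z Q) := by
      refine subtrans_insert (subtrans_mono hsBj hQbig) ?_
      intro u hu hc
      rw [hAW.1] at hc
      rcases Finset.mem_insert.mp hu with rfl | h
      · exact hj (by rw [← h'.1, hc])
      · exact hEnoi u (Finset.mem_of_mem_erase h) hc
    have hC'Qi : C' ⊆ insert (Bv cls B i) Q := by
      intro v hv
      rcases Finset.mem_insert.mp (hC'sub hv) with rfl | h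
      · exact Finset.mem_insert_of_mem (Finset.mem_insert_self _ _)
      · by_cases hvB : v = Bv cls B i
        · rw [hvB]; exact Finset.mem_insert_self _ _
        · refine Finset.mem_insert_of_mem (Finset.mem_insert_of_mem ?_)
          exact Finset.mem_erase.mpr ⟨(Finset.mem_erase.mp h).1,
            Finset.mem_erase.mpr ⟨hvB, Finset.mem_of_mem_erase h⟩⟩
    have hCQz : C ⊆ insert z Q := by
      intro v hv
      rcases Finset.mem_insert.mp (hCsub' hv) with rfl | h
      · exact Finset.mem_insert_self _ _
      · exact Finset.mem_insert_of_mem (Finset.mem_insert_of_mem h)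
    have hQnoi : ∀ u ∈ Q, cls u ≠ i := by
      intro u hu hc
      rcases Finset.mem_insert.mp hu with rfl | h
      · exact hj (by rw [← h'.1, hc])
      · exact hEnoi u (Finset.mem_of_mem_erase h) hc
    have hdepC' : r C' < C'.card := h'.2.2.1.2.1
    have hdepC : r C < C.card := hAW.2.2.1.2.1
    -- T₂ is dependent
    have hdepT₂ : r T₂ < T₂.card := by
      by_contra hcon
      push_neg at hcon
      have hIT₂ : Indep cls r T₂ := ⟨hsT₂, le_antisymm (hM.rank_le_card _ hsT₂) hcon⟩
      have hQT₂ : Q ⊆ T₂ := by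
        rw [hT₂def, hT2eq]
        refine Finset.insert_subset_insert _ (Finset.subset_insert _ _)
      have hIQ : Indep cls r Q := indep_subset hM hIT₂ hQT₂
      refine dep_ext_unique hM hIQ (fun u hu => ?_) ?_ hzBvi.symm ?_ ?_
      · rw [Bv_cls hT i]; exact hQnoi u hu
      · rw [Bv_cls hT i, hAW.1]
      · exact dep_superset hM hsQis hC'Qi hdepC'
      · exact dep_superset hM hsQz hCQz hdepC
    obtain ⟨D', hD'T₂, hD'circ⟩ := exists_circuit hM hsT₂ hdepT₂
    have hXind : Indep cls r (B₂.erase (Bv cls B₂ j)) :=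
      indep_subset hM hBas₂.1 (Finset.erase_subset _ _)
    have hz'X : z' ∉ B₂.erase (Bv cls B₂ j) := fun hc => hz'B₂ (Finset.mem_of_mem_erase hc)
    have hz'D' : z' ∈ D' := by
      by_contra hzD
      refine circuit_not_indep hM hD'circ hXind (fun u hu => ?_)
      rcases Finset.mem_insert.mp (hD'T₂ hu) with rfl | h
      · exact absurd hu hzD
      · exact h
    have hmin' : ∀ u ∈ D', j ≤ cls u := by
      intro u hu
      by_contra hlt
      push_neg at hlt
      have huz' : u ≠ z' := fun hc => absurd (hc ▸ hlt) (by rw [h'.1]; exact lt_irrefl j)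
      have hux : u ≠ x := fun hc => absurd (hc ▸ hlt) (by rw [hx]; exact not_lt.mpr hij.le)
      have huC : u ∉ C := fun hc =>
        absurd (hCge u hc) (not_le.mpr (lt_trans hlt hij))
      have huC' : u ∉ C' := fun hc => absurd (hC'ge u hc) (not_le.mpr hlt)
      have huE : u ∈ E.erase (Bv cls B j) := by
        have h1 := hD'T₂ hu
        rw [hT₂def, hT2eq] at h1
        rcases Finset.mem_insert.mp h1 with rfl | h1
        · exact absurd rfl huz'
        · rcases Finset.mem_insert.mp h1 with rfl | h1
          · exact absurd rfl hux
          · exact h1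
      -- T₂.erase u is independent
      have hTu : Indep cls r (T₂.erase u) := by
        refine ⟨subtrans_mono hsT₂ (Finset.erase_subset _ _), ?_⟩
        refine le_antisymm (hM.rank_le_card _ (subtrans_mono hsT₂ (Finset.erase_subset _ _))) ?_
        by_contra hcon
        push_neg at hcon
        obtain ⟨E', hE'sub, hE'circ⟩ :=
          exists_circuit hM (subtrans_mono hsT₂ (Finset.erase_subset _ _)) hcon
        have hEq : E' = D' := circuit_unique hM hXind hsT₂ hE'circ hD'circ
          (hE'sub.trans (Finset.erase_subset _ _)) hD'T₂
        have : u ∈ E' := hEq ▸ hu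
        exact (Finset.mem_erase.mp (hE'sub this)).1 rfl
      set P := insert z' ((E.erase (Bv cls B j)).erase u) with hP
      have hPTu : P ⊆ T₂.erase u := by
        intro v hv
        rcases Finset.mem_insert.mp hv with rfl | h
        · exact Finset.mem_erase.mpr ⟨huz'.symm, Finset.mem_insert_self _ _⟩
        · refine Finset.mem_erase.mpr ⟨(Finset.mem_erase.mp h).1, ?_⟩
          rw [hT₂def, hT2eq]
          exact Finset.mem_insert_of_mem (Finset.mem_insert_of_mem (Finset.mem_of_mem_erase h))
      have hIP : Indep cls r P := indep_subset hM hTu hPTu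
      have hPQ : P ⊆ Q := by
        refine Finset.insert_subset_insert _ (Finset.erase_subset _ _)
      have hC'Pi : C' ⊆ insert (Bv cls B i) P := by
        intro v hv
        rcases Finset.mem_insert.mp (hC'Qi hv) with rfl | h
        · exact Finset.mem_insert_self _ _
        · rcases Finset.mem_insert.mp h with rfl | h
          · exact Finset.mem_insert_of_mem (Finset.mem_insert_self _ _)
          · refine Finset.mem_insert_of_mem (Finset.mem_insert_of_mem ?_)
            exact Finset.mem_erase.mpr ⟨fun hc => huC' (hc ▸ hv), h⟩
      have hCPz : C ⊆ insert z P := by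
        intro v hv
        rcases Finset.mem_insert.mp (hCsub' hv) with rfl | h
        · exact Finset.mem_insert_self _ _
        · refine Finset.mem_insert_of_mem (Finset.mem_insert_of_mem ?_)
          exact Finset.mem_erase.mpr ⟨fun hc => huC (hc ▸ hv), h⟩
      have hsPis : Subtransversal cls (insert (Bv cls B i) P) :=
        subtrans_mono hsQis (Finset.insert_subset_insert _ hPQ)
      have hsPz : Subtransversal cls (insert z P) :=
        subtrans_mono hsQz (Finset.insert_subset_insert _ hPQ)
      refine dep_ext_unique hM hIP (fun v hv => ?_) ?_ hzBvi.symm ?_ ?_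
      · rw [Bv_cls hT i]; exact hQnoi v (hPQ hv)
      · rw [Bv_cls hT i, hAW.1]
      · exact dep_superset hM hsPis hC'Pi hdepC'
      · exact dep_superset hM hsPz hCPz hdepC
    exact ⟨D', h'.1, hz'B₂, hD'circ, hD'T₂, hmin'⟩
  · -- easy case: same circuit works
    refine ⟨C', h'.1, hz'B₂, h'.2.2.1, ?_, h'.2.2.2.2⟩
    rw [hBvj]
    intro u hu
    rcases Finset.mem_insert.mp (h'.2.2.2.1 hu) with rfl | h
    · exact Finset.mem_insert_self _ _
    · have huB : u ∈ B := Finset.mem_of_mem_erase h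
      have hune : u ≠ Bv cls B j := (Finset.mem_erase.mp h).1
      refine Finset.mem_insert_of_mem (Finset.mem_erase.mpr ⟨hune, ?_⟩)
      refine Finset.mem_insert_of_mem (Finset.mem_erase.mpr ⟨?_, huB⟩)
      intro hc
      exact hBvi (hc ▸ hu)

lemma swap_AW_rev (j : ι) (z' : U) (C' : Finset U)
    (h' : AW cls r (insert x (B.erase (Bv cls B i))) j z' C') :
    ∃ C'', AW cls r B j z' C'' := by
  set B₂ := insert x (B.erase (Bv cls B i)) with hB₂
  have hT₂ : Transversal cls B₂ := swap_transversal hM hB hT hAW hx hxB hxz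
  have hBas₂ : MMBasis cls r B₂ := swap_basis hM hB hT hAW hx hxB hxz
  have hAW₂ : AW cls r B₂ i z C := swap_AW_self hM hB hT hAW hx hxB hxz
  have hy : cls (Bv cls B i) = i := Bv_cls hT i
  have hyB₂ : Bv cls B i ∉ B₂ := by
    intro hc
    rcases Finset.mem_insert.mp hc with h | h
    · exact hxB (h ▸ Bv_mem hT i)
    · exact (Finset.mem_erase.mp h).1 rfl
  have hyz : Bv cls B i ≠ z := fun hc => hAW.2.1 (hc ▸ Bv_mem hT i)
  have hset : insert (Bv cls B i) (B₂.erase (Bv cls B₂ i)) = B := by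
    rw [swap_erase_eq hM hB hT hAW hx hxB hxz]
    exact Finset.insert_erase (Bv_mem hT i)
  have hkey := swap_AW hM hBas₂ hT₂ hAW₂ hy hyB₂ hyz j z' C' h'
  rwa [hset] at hkey

lemma swap_active_iff (j : ι) :
    Active cls r B j ↔ Active cls r (insert x (B.erase (Bv cls B i))) j := by
  have hT₂ : Transversal cls _ := swap_transversal hM hB hT hAW hx hxB hxz
  have hBas₂ : MMBasis cls r _ := swap_basis hM hB hT hAW hx hxB hxz
  rw [active_iff_AW hM hB hT j, active_iff_AW hM hBas₂ hT₂ j]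
  constructor
  · rintro ⟨z', C', h'⟩
    obtain ⟨C'', h''⟩ := swap_AW hM hB hT hAW hx hxB hxz j z' C' h'
    exact ⟨z', C'', h''⟩
  · rintro ⟨z', C', h'⟩
    obtain ⟨C'', h''⟩ := swap_AW_rev hM hB hT hAW hx hxB hxz j z' C' h'
    exact ⟨z', C'', h''⟩

end Swap

section Equiv
variable [DecidableEq U] [Fintype U] [DecidableEq ι] [Fintype ι] [LinearOrder ι] [Nonempty U]
variable {cls : U → ι} {r : Finset U → ℕ}
set_option linter.unusedSectionVars false

variable (hM : IsMultimatroid cls r)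
include hM

/-- across the equivalence class, forbidden elements (activity witnesses) agree -/
lemma sameCls_AW : ∀ n (B₁ B₂ : Finset U), MMBasis cls r B₁ → MMBasis cls r B₂ →
    Transversal cls B₁ → Transversal cls B₂ →
    (∀ j, Active cls r B₁ j ↔ Active cls r B₂ j) →
    (∀ y : U, ¬ Active cls r B₁ (cls y) → (y ∈ B₁ ↔ y ∈ B₂)) →
    (Finset.univ.filter (fun j : ι => Bv cls B₁ j ≠ Bv cls B₂ j)).card ≤ n →
    ∀ j z' C', AW cls r B₂ j z' C' → ∃ C'', AW cls r B₁ j z' C'' := by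
  intro n
  induction n with
  | zero =>
    intro B₁ B₂ h1 h2 hT1 hT2 hact hin hcard j z' C' h'
    have hD : Finset.univ.filter (fun j : ι => Bv cls B₁ j ≠ Bv cls B₂ j) = ∅ :=
      Finset.card_eq_zero.mp (Nat.le_zero.mp hcard)
    have heq : B₁ = B₂ := by
      refine transversal_ext hT1 hT2 (fun k => ?_)
      by_contra hne
      exact (Finset.filter_eq_empty_iff.mp hD (Finset.mem_univ k)) hne
    exact ⟨C', heq ▸ h'⟩
  | succ n ih =>
    intro B₁ B₂ h1 h2 hT1 hT2 hact hin hcard j z' C' h'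
    set D := Finset.univ.filter (fun j : ι => Bv cls B₁ j ≠ Bv cls B₂ j) with hD
    by_cases hDe : D = ∅
    · have heq : B₁ = B₂ := by
        refine transversal_ext hT1 hT2 (fun k => ?_)
        by_contra hne
        exact (Finset.filter_eq_empty_iff.mp hDe (Finset.mem_univ k)) hne
      exact ⟨C', heq ▸ h'⟩
    have hDne : D.Nonempty := Finset.nonempty_of_ne_empty hDe
    set i := D.max' hDne with hi
    have hiD : i ∈ D := D.max'_mem hDne
    have himax : ∀ k ∈ D, k ≤ i := fun k hk => D.le_max' k hk
    have hiBv : Bv cls B₁ i ≠ Bv cls B₂ i := (Finset.mem_filter.mp hiD).2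
    -- i is active for B₁
    have hiact : Active cls r B₁ i := by
      by_contra hnact
      have h3 : ¬ Active cls r B₁ (cls (Bv cls B₂ i)) := by rwa [Bv_cls hT2 i]
      have h4 : Bv cls B₂ i ∈ B₁ := (hin _ h3).mpr (Bv_mem hT2 i)
      exact hiBv (Bv_eq hT1 h4 (Bv_cls hT2 i)).symm
    have hiact2 : Active cls r B₂ i := (hact i).mp hiact
    obtain ⟨z₂, C₂, hAW2⟩ := (active_iff_AW hM h2 hT2 i).mp hiact2
    -- transfer the witness to B₁
    have hAW1 : AW cls r B₁ i z₂ C₂ := by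
      have hsub : C₂ ⊆ insert z₂ (B₁.erase (Bv cls B₁ i)) := by
        intro u hu
        rcases Finset.mem_insert.mp (hAW2.2.2.2.1 hu) with rfl | h
        · exact Finset.mem_insert_self _ _
        · have hclsu : i < cls u := by
            refine lt_of_le_of_ne (hAW2.2.2.2.2 u hu) ?_
            intro hc
            exact (erase_free hT2 h) hc.symm
          have hnotD : cls u ∉ D := fun hc => absurd (himax _ hc) (not_le.mpr hclsu)
          have hBveq : Bv cls B₁ (cls u) = Bv cls B₂ (cls u) := by
            by_contra hne
            exact hnotD (Finset.mem_filter.mpr ⟨Finset.mem_univ _, hne⟩)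
          have hu2 : u = Bv cls B₂ (cls u) := Bv_eq hT2 (Finset.mem_of_mem_erase h) rfl
          have huB1 : u ∈ B₁ := by
            rw [hu2, ← hBveq]; exact Bv_mem hT1 _
          refine Finset.mem_insert_of_mem (Finset.mem_erase.mpr ⟨?_, huB1⟩)
          intro hc
          rw [hc, Bv_cls hT1 i] at hclsu
          exact lt_irrefl _ hclsu
      have hz₂B₁ : z₂ ∉ B₁ := by
        intro hc
        refine circuit_not_indep hM hAW2.2.2.1 h1.1 (fun u hu => ?_)
        rcases Finset.mem_insert.mp (hsub hu) with rfl | h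
        · exact hc
        · exact Finset.mem_of_mem_erase h
      exact ⟨hAW2.1, hz₂B₁, hAW2.2.2.1, hsub, hAW2.2.2.2.2⟩
    -- swap B₁ at i to Bv B₂ i
    set x := Bv cls B₂ i with hxdef
    have hxcls : cls x = i := Bv_cls hT2 i
    have hxB1 : x ∉ B₁ := fun hc => hiBv (Bv_eq hT1 hc hxcls).symm
    have hxz : x ≠ z₂ := fun hc => hAW2.2.1 (hc ▸ Bv_mem hT2 i)
    set B₁' := insert x (B₁.erase (Bv cls B₁ i)) with hB₁'
    have hT1' : Transversal cls B₁' := swap_transversal hM h1 hT1 hAW1 hxcls hxB1 hxz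
    have hBas1' : MMBasis cls r B₁' := swap_basis hM h1 hT1 hAW1 hxcls hxB1 hxz
    have hactiff : ∀ k, Active cls r B₁ k ↔ Active cls r B₁' k :=
      swap_active_iff hM h1 hT1 hAW1 hxcls hxB1 hxz
    -- the new pair differs on fewer classes
    have hDsub : (Finset.univ.filter (fun k : ι => Bv cls B₁' k ≠ Bv cls B₂ k)) ⊆ D.erase i := by
      intro k hk
      rw [Finset.mem_filter] at hk
      by_cases hki : k = i
      · exfalso
        apply hk.2
        rw [hki, swap_Bv_self hM h1 hT1 hAW1 hxcls hxB1 hxz]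
      · refine Finset.mem_erase.mpr ⟨hki, Finset.mem_filter.mpr ⟨Finset.mem_univ _, ?_⟩⟩
        rw [← swap_Bv_ne hM h1 hT1 hAW1 hxcls hxB1 hxz hki]
        exact hk.2
    have hcard' : (Finset.univ.filter (fun k : ι => Bv cls B₁' k ≠ Bv cls B₂ k)).card ≤ n := by
      have h5 := Finset.card_le_card hDsub
      have h6 : (D.erase i).card = D.card - 1 := Finset.card_erase_of_mem hiD
      omega
    have hin' : ∀ y : U, ¬ Active cls r B₁' (cls y) → (y ∈ B₁' ↔ y ∈ B₂) := by
      intro y hy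
      have hy1 : ¬ Active cls r B₁ (cls y) := fun hc => hy ((hactiff _).mp hc)
      have hyi : cls y ≠ i := fun hc => hy1 (hc ▸ hiact)
      rw [← swap_mem_iff hM h1 hT1 hAW1 hxcls hxB1 hxz hyi]
      exact hin y hy1
    have hact' : ∀ k, Active cls r B₁' k ↔ Active cls r B₂ k :=
      fun k => (hactiff k).symm.trans (hact k)
    obtain ⟨C'', h''⟩ := ih B₁' B₂ hBas1' h2 hT1' hT2 hact' hin' hcard' j z' C' h'
    exact swap_AW_rev hM h1 hT1 hAW1 hxcls hxB1 hxz j z' C'' h''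

/-- construction of all members of the equivalence class -/
lemma construct {B : Finset U} (hB : MMBasis cls r B) (hT : Transversal cls B)
    (S : Finset ι) (g : ι → U)
    (hg : ∀ j ∈ S, cls (g j) = j ∧ Active cls r B j ∧
      ∀ z C, AW cls r B j z C → g j ≠ z) :
    ∃ B', MMBasis cls r B' ∧ Transversal cls B' ∧
      (∀ k, Active cls r B k ↔ Active cls r B' k) ∧
      (∀ y : U, ¬ Active cls r B (cls y) → (y ∈ B ↔ y ∈ B')) ∧
      (∀ j ∈ S, Bv cls B' j = g j) ∧
      (∀ j ∉ S, Bv cls B' j = Bv cls B j) ∧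
      (∀ j z C, AW cls r B j z C → ∃ C', AW cls r B' j z C') := by
  classical
  induction S using Finset.induction_on with
  | empty =>
    exact ⟨B, hB, hT, fun k => Iff.rfl, fun y _ => Iff.rfl, fun j hj => absurd hj (by simp),
      fun j _ => rfl, fun j z C h => ⟨C, h⟩⟩
  | @insert i S₀ hiS₀ ih =>
    obtain ⟨B', hB', hT', hact', hin', hgS, hgnS, hAWp⟩ :=
      ih (fun j hj => hg j (Finset.mem_insert_of_mem hj))
    obtain ⟨hgi, hacti, hgz⟩ := hg i (Finset.mem_insert_self _ _)
    obtain ⟨z, C, hAWB⟩ := (active_iff_AW hM hB hT i).mp hacti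
    obtain ⟨C₂, hAWB'⟩ := hAWp i z C hAWB
    by_cases hfix : g i = Bv cls B' i
    · refine ⟨B', hB', hT', hact', hin', ?_, ?_, hAWp⟩
      · intro j hj
        rcases Finset.mem_insert.mp hj with rfl | hj
        · exact hfix ▸ rfl
        · exact hgS j hj
      · intro j hj
        exact hgnS j (fun hc => hj (Finset.mem_insert_of_mem hc))
    · set x := g i with hxg
      have hxB' : x ∉ B' := fun hc => hfix (Bv_eq hT' hc hgi)
      have hxz : x ≠ z := hgz z C hAWB
      set B'' := insert x (B'.erase (Bv cls B' i)) with hB''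
      have hT'' : Transversal cls B'' := swap_transversal hM hB' hT' hAWB' hgi hxB' hxz
      have hBas'' : MMBasis cls r B'' := swap_basis hM hB' hT' hAWB' hgi hxB' hxz
      have hactiff : ∀ k, Active cls r B' k ↔ Active cls r B'' k :=
        swap_active_iff hM hB' hT' hAWB' hgi hxB' hxz
      refine ⟨B'', hBas'', hT'', ?_, ?_, ?_, ?_, ?_⟩
      · exact fun k => (hact' k).trans (hactiff k)
      · intro y hy
        have hyi : cls y ≠ i := fun hc => hy (hc ▸ hacti)
        rw [hin' y hy]
        exact swap_mem_iff hM hB' hT' hAWB' hgi hxB' hxz hyi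
      · intro j hj
        rcases Finset.mem_insert.mp hj with rfl | hj
        · exact swap_Bv_self hM hB' hT' hAWB' hgi hxB' hxz
        · have hji : j ≠ i := fun hc => hiS₀ (hc ▸ hj)
          rw [swap_Bv_ne hM hB' hT' hAWB' hgi hxB' hxz hji]
          exact hgS j hj
      · intro j hj
        have hji : j ≠ i := fun hc => hj (hc ▸ Finset.mem_insert_self _ _)
        rw [swap_Bv_ne hM hB' hT' hAWB' hgi hxB' hxz hji]
        exact hgnS j (fun hc => hj (Finset.mem_insert_of_mem hc))
      · intro j z' C' h'
        obtain ⟨C₃, h₃⟩ := hAWp j z' C' h'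
        exact swap_AW hM hB' hT' hAWB' hgi hxB' hxz j z' C₃ h₃

end Equiv

/-- the size of the `∼`-equivalence class of a basis `B` is
`∏_{ω active} (|ω| − 1)`, where `B ∼ B'` iff they have the same active skew classes
and agree on every inactive skew class. -/

theorem stmt_12 [DecidableEq U] [Fintype U] [DecidableEq ι] [Fintype ι] [LinearOrder ι]
    (cls : U → ι) (r : Finset U → ℕ) (hM : IsMultimatroid cls r)
    (hnd : Nondegenerate cls) (B : Finset U) (hB : MMBasis cls r B) :
    (Finset.univ.filter (fun B' : Finset U => MMBasis cls r B' ∧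
        (∀ j : ι, Active cls r B j ↔ Active cls r B' j) ∧
        (∀ x : U, ¬ Active cls r B (cls x) → (x ∈ B ↔ x ∈ B')))).card
      = ∏ j ∈ Finset.univ.filter (fun j : ι => Active cls r B j),
          ((skewClass cls j).card - 1) := by
  classical
  rcases isEmpty_or_nonempty U with hU | hU
  · -- degenerate case: U (hence ι) is empty
    haveI hι : IsEmpty ι := ⟨fun i => by
      obtain ⟨u, _⟩ := hM.cls_surj i
      exact hU.elim u⟩
    have h1 : (Finset.univ : Finset ι) = ∅ := Finset.univ_eq_empty
    rw [h1, Finset.filter_empty, Finset.prod_empty]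
    have h2 : (Finset.univ : Finset (Finset U)).filter (fun B' : Finset U => MMBasis cls r B' ∧
        (∀ j : ι, Active cls r B j ↔ Active cls r B' j) ∧
        (∀ x : U, ¬ Active cls r B (cls x) → (x ∈ B ↔ x ∈ B'))) = {B} := by
      ext B'
      simp only [Finset.mem_filter, Finset.mem_univ, true_and, Finset.mem_singleton]
      constructor
      · intro _
        ext x
        exact (hU.elim x)
      · rintro rfl
        exact ⟨hB, fun j => Iff.rfl, fun x => (hU.elim x)⟩
    rw [h2, Finset.card_singleton]
  -- main case
  have hT : Transversal cls B := basis_transversal hM hnd hB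
  set A := Finset.univ.filter (fun j : ι => Active cls r B j) with hA
  have hch : ∀ j : ι, ∃ (z : U) (C : Finset U), j ∈ A → AW cls r B j z C := by
    intro j
    by_cases hj : j ∈ A
    · obtain ⟨z, C, h⟩ := (active_iff_AW hM hB hT j).mp (Finset.mem_filter.mp hj).2
      exact ⟨z, C, fun _ => h⟩
    · exact ⟨Classical.arbitrary U, ∅, fun h => absurd h hj⟩
  choose zf Cf hzf using hch
  have hzcls : ∀ j ∈ A, cls (zf j) = j := fun j hj => (hzf j hj).1
  rw [show ∏ j ∈ A, ((skewClass cls j).card - 1)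
      = (A.pi (fun j => (skewClass cls j).erase (zf j))).card by
    rw [Finset.card_pi]
    refine Finset.prod_congr rfl (fun j hj => ?_)
    rw [Finset.card_erase_of_mem]
    simp only [skewClass, Finset.mem_filter, Finset.mem_univ, true_and]
    exact hzcls j hj]
  refine Finset.card_bij (fun B' _ => fun j (_ : j ∈ A) => Bv cls B' j) ?_ ?_ ?_
  · -- maps to
    intro B' hB'
    rw [Finset.mem_filter] at hB'
    obtain ⟨-, hBas', hactiff, hinag⟩ := hB'
    have hT' : Transversal cls B' := basis_transversal hM hnd hBas'
    rw [Finset.mem_pi]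
    intro j hj
    rw [Finset.mem_erase]
    constructor
    · -- Bv B' j ≠ zf j
      obtain ⟨C'', hAW'⟩ := sameCls_AW hM _ B' B hBas' hB hT' hT
        (fun k => (hactiff k).symm)
        (fun y hy => (hinag y (fun hc => hy ((hactiff _).mp hc))).symm)
        (le_refl _) j (zf j) (Cf j) (hzf j hj)
      intro hc
      exact hAW'.2.1 (hc ▸ Bv_mem hT' j)
    · simp only [skewClass, Finset.mem_filter, Finset.mem_univ, true_and]
      exact Bv_cls hT' j
  · -- injective
    intro B₁' h₁ B₂' h₂ heq
    rw [Finset.mem_filter] at h₁ h₂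
    obtain ⟨-, hBas₁, hactiff₁, hinag₁⟩ := h₁
    obtain ⟨-, hBas₂, hactiff₂, hinag₂⟩ := h₂
    have hT₁ : Transversal cls B₁' := basis_transversal hM hnd hBas₁
    have hT₂ : Transversal cls B₂' := basis_transversal hM hnd hBas₂
    refine transversal_ext hT₁ hT₂ (fun k => ?_)
    by_cases hk : k ∈ A
    · exact congr_fun (congr_fun heq k) hk
    · have hkact : ¬ Active cls r B k := fun hc =>
        hk (Finset.mem_filter.mpr ⟨Finset.mem_univ _, hc⟩)
      have e₁ : Bv cls B₁' k = Bv cls B k := by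
        have h3 : ¬ Active cls r B (cls (Bv cls B₁' k)) := by rwa [Bv_cls hT₁ k]
        have h4 : Bv cls B₁' k ∈ B := (hinag₁ _ h3).mpr (Bv_mem hT₁ k)
        exact Bv_eq hT h4 (Bv_cls hT₁ k)
      have e₂ : Bv cls B₂' k = Bv cls B k := by
        have h3 : ¬ Active cls r B (cls (Bv cls B₂' k)) := by rwa [Bv_cls hT₂ k]
        have h4 : Bv cls B₂' k ∈ B := (hinag₂ _ h3).mpr (Bv_mem hT₂ k)
        exact Bv_eq hT h4 (Bv_cls hT₂ k)
      rw [e₁, e₂]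
  · -- surjective
    intro f hf
    rw [Finset.mem_pi] at hf
    set g : ι → U := fun j => if h : j ∈ A then f j h else Classical.arbitrary U with hg
    have hgspec : ∀ j ∈ A, cls (g j) = j ∧ Active cls r B j ∧
        ∀ z C, AW cls r B j z C → g j ≠ z := by
      intro j hj
      have hfj := hf j hj
      rw [Finset.mem_erase] at hfj
      have hgj : g j = f j hj := by rw [hg]; exact dif_pos hj
      refine ⟨?_, (Finset.mem_filter.mp hj).2, ?_⟩
      · rw [hgj]
        have := hfj.2
        simp only [skewClass, Finset.mem_filter, Finset.mem_univ, true_and] at this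
        exact this
      · intro z C hAWz
        have : z = zf j := AW_unique_z hM hB hT hAWz (hzf j hj)
        rw [this, hgj]
        exact hfj.1
    obtain ⟨B', hBas', hT', hactiff, hinag, hgS, hgnS, hAWp⟩ :=
      construct hM hB hT A g hgspec
    refine ⟨B', Finset.mem_filter.mpr ⟨Finset.mem_univ _, hBas', hactiff, hinag⟩, ?_⟩
    funext j hj
    show Bv cls B' j = f j hj
    rw [hgS j hj, hg]
    exact dif_pos hj
end

section
/- Let Z be a non-degenerate multimatroid with total order ≺ on its skew classes. Then the weighted transition polynomial satisfies Q(Z; x, t) = Σ_{B ∈ B(Z)} (∏_{ω inactive w.r.t. B} x_{B_ω}) · (∏_{ω active w.r.t. B} ( t·x_{B̲_ω}/(|ω|−1) + x_{B_ω} )). -/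
open Finset
open scoped Classical

variable {U ι : Type}

/-- For a basis `B` and active skew class `i`, the element `B̲_ω`: the unique element
of the fundamental circuit `C(B,ω)` outside `B` (with default value `d` when the
fundamental circuit does not exist). -/
noncomputable def underElt [DecidableEq U] [Fintype U] [DecidableEq ι] [Fintype ι]
    (cls : U → ι) (r : Finset U → ℕ) (B : Finset U) (i : ι) (d : U) : U :=
  if h : ∃ x : U, ∃ C, Circuit cls r C ∧ C ⊆ B ∪ skewClass cls i ∧ x ∈ C ∧ x ∉ B
  then h.choose else d

/-!
Induct on the set `J` of skew classes still present, carrying the rank function `ρ` of the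
current minor on the original carrier. Let `ω` be the `≺`-largest class of `J`. Every transversal
is `v + T'` with `v ∈ ω`, and `t^{n(T)} = t^{1 - ρ{v}} t^{n(T')}` with `n(T')` computed in the
contraction `Z/v`; bases split the same way, through non-loops `v`. Because `ω` is largest, a
circuit whose least element lies in a smaller class passes between `Z` and `Z/v`, so every other
class has the same activity and the same `B̲` for `v + B'` in `Z` as for `B'` in `Z/v`, while `ω`
itself is active exactly when it contains a loop `m`.

Without a loop both sides are `Σ_v x_v Q(Z/v)` by induction. With a loop `m`, axiom (R2) makes
every other `v ∈ ω` raise the rank of every set avoiding `ω`, so all contractions `Z/v` have the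
rank function `ρ` on the remaining classes, with common expansion `L`. The left side is then
`(t x_m + Σ_{v ≠ m} x_v) L`, and the right side `Σ_{v ≠ m} (t x_m / (|ω| - 1) + x_v) L`.
-/

section Transversals
variable {cls : U → ι} {J : Finset ι}

theorem mem_skewClass [Fintype U] [DecidableEq ι] {u : U} {i : ι} :
    u ∈ skewClass cls i ↔ cls u = i := by
  simp [skewClass]

theorem Subtransversal.subset {S T : Finset U} (hT : Subtransversal cls T) (h : S ⊆ T) :
    Subtransversal cls S :=
  Set.InjOn.mono (coe_subset.2 h) hT

theorem Subtransversal.insert [DecidableEq U] {S : Finset U} {v : U}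
    (hS : Subtransversal cls S) (hv : ∀ u ∈ S, cls u ≠ cls v) :
    Subtransversal cls (insert v S) := by
  have hvS : v ∉ S := fun h => hv v h rfl
  rw [Subtransversal, coe_insert, Set.injOn_insert (mem_coe.not.2 hvS)]
  exact ⟨hS, fun ⟨u, hu, huv⟩ => hv u hu huv⟩

def SubtransversalOn (cls : U → ι) (J : Finset ι) (S : Finset U) : Prop :=
  Subtransversal cls S ∧ ∀ u ∈ S, cls u ∈ J

def IsTransversalOn (cls : U → ι) (J : Finset ι) (T : Finset U) : Prop :=
  SubtransversalOn cls J T ∧ ∀ i ∈ J, ∃ u ∈ T, cls u = i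

theorem SubtransversalOn.subset {S T : Finset U} (hT : SubtransversalOn cls J T) (h : S ⊆ T) :
    SubtransversalOn cls J S :=
  ⟨hT.1.subset h, fun u hu => hT.2 u (h hu)⟩

theorem SubtransversalOn.mono {J' : Finset ι} {S : Finset U} (hS : SubtransversalOn cls J' S)
    (h : J' ⊆ J) : SubtransversalOn cls J S :=
  ⟨hS.1, fun u hu => h (hS.2 u hu)⟩

theorem subtransversalOn_empty : SubtransversalOn cls J (∅ : Finset U) :=
  ⟨by simp [Subtransversal], by simp⟩

theorem SubtransversalOn.insert [DecidableEq U] {S : Finset U} {v : U}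
    (hS : SubtransversalOn cls J S) (hvJ : cls v ∈ J) (hv : ∀ u ∈ S, cls u ≠ cls v) :
    SubtransversalOn cls J (insert v S) :=
  ⟨hS.1.insert hv, fun u hu => (mem_insert.1 hu).elim (· ▸ hvJ) (hS.2 u)⟩

theorem SubtransversalOn.notMem_of_erase [DecidableEq ι] {S : Finset U} {v : U}
    (hS : SubtransversalOn cls (J.erase (cls v)) S) : v ∉ S :=
  fun h => (mem_erase.1 (hS.2 v h)).1 rfl

theorem subtransversalOn_insert_of_erase [DecidableEq U] [DecidableEq ι] {S : Finset U} {v : U}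
    (hS : SubtransversalOn cls (J.erase (cls v)) S) (hvJ : cls v ∈ J) :
    SubtransversalOn cls J (insert v S) :=
  (hS.mono (erase_subset _ _)).insert hvJ fun u hu => (mem_erase.1 (hS.2 u hu)).1

theorem SubtransversalOn.of_sdiff_subset [DecidableEq U] [Fintype U] [DecidableEq ι]
    {S B : Finset U} {i : ι} (hS : Subtransversal cls S) (hSB : S \ skewClass cls i ⊆ B)
    (hB : SubtransversalOn cls J B) (hi : i ∈ J) : SubtransversalOn cls J S := by
  refine ⟨hS, fun u hu => ?_⟩
  by_cases hui : cls u = i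
  · exact hui ▸ hi
  · exact hB.2 u (hSB (mem_sdiff.2 ⟨hu, mem_skewClass.not.2 hui⟩))

theorem isTransversalOn_univ_iff [Fintype ι] {T : Finset U} :
    IsTransversalOn cls univ T ↔ Transversal cls T :=
  ⟨fun h => ⟨h.1.1, fun i => h.2 i (mem_univ i)⟩,
    fun h => ⟨⟨h.1, fun _ _ => mem_univ _⟩, fun i _ => h.2 i⟩⟩

theorem isTransversalOn_insert_iff [DecidableEq U] [DecidableEq ι] {v : U} {T : Finset U}
    (hvJ : cls v ∈ J) (hvT : v ∉ T) :
    IsTransversalOn cls J (insert v T) ↔ IsTransversalOn cls (J.erase (cls v)) T := by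
  constructor
  · rintro ⟨hsub, hcov⟩
    refine ⟨⟨hsub.1.subset (subset_insert v T), fun u hu => mem_erase.2 ⟨fun hui => ?_,
      hsub.2 u (mem_insert_of_mem hu)⟩⟩, fun i hi => ?_⟩
    · exact hvT (hsub.1 (mem_insert_of_mem hu) (mem_insert_self v T) hui ▸ hu)
    · obtain ⟨u, hu, rfl⟩ := hcov i (mem_of_mem_erase hi)
      rcases mem_insert.1 hu with rfl | hu
      · exact absurd rfl (mem_erase.1 hi).1
      · exact ⟨u, hu, rfl⟩
  · rintro ⟨hsub, hcov⟩
    refine ⟨subtransversalOn_insert_of_erase hsub hvJ, fun i hi => ?_⟩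
    by_cases hiv : i = cls v
    · exact ⟨v, mem_insert_self v T, hiv.symm⟩
    · obtain ⟨u, hu, rfl⟩ := hcov i (mem_erase.2 ⟨hiv, hi⟩)
      exact ⟨u, mem_insert_of_mem hu, rfl⟩

noncomputable def transversalsOn [Fintype U] (cls : U → ι) (J : Finset ι) :
    Finset (Finset U) :=
  univ.filter (IsTransversalOn cls J)

theorem sum_transversalsOn [DecidableEq U] [Fintype U] [DecidableEq ι] {M : Type}
    [AddCommMonoid M] {i₀ : ι} (hi₀ : i₀ ∈ J) (f : Finset U → M) :
    ∑ T ∈ transversalsOn cls J, f T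
      = ∑ v ∈ skewClass cls i₀, ∑ T ∈ transversalsOn cls (J.erase i₀), f (insert v T) := by
  have hnotMem : ∀ v ∈ skewClass cls i₀, ∀ T ∈ transversalsOn cls (J.erase i₀), v ∉ T :=
    fun v hv T hT hvT => (mem_erase.1 ((mem_filter.1 hT).2.1.2 v hvT)).1 (mem_skewClass.1 hv)
  have hinsert : ∀ v ∈ skewClass cls i₀, ∀ T, v ∉ T →
      (IsTransversalOn cls J (insert v T) ↔ IsTransversalOn cls (J.erase i₀) T) :=
    fun v hv _ hvT => mem_skewClass.1 hv ▸ isTransversalOn_insert_iff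
      ((mem_skewClass.1 hv).symm ▸ hi₀) hvT
  rw [← sum_product']
  symm
  refine sum_nbij (fun p => insert p.1 p.2) ?_ ?_ ?_ fun _ _ => rfl
  · rintro ⟨v, T⟩ hp
    obtain ⟨hv, hT⟩ := mem_product.1 hp
    exact mem_filter.2 ⟨mem_univ _, (hinsert v hv T (hnotMem v hv T hT)).2 (mem_filter.1 hT).2⟩
  · rintro ⟨v₁, T₁⟩ hp₁ ⟨v₂, T₂⟩ hp₂ (heq : insert v₁ T₁ = insert v₂ T₂)
    obtain ⟨hv₁, hT₁⟩ := mem_product.1 hp₁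
    obtain ⟨hv₂, hT₂⟩ := mem_product.1 hp₂
    obtain rfl : v₂ = v₁ :=
      (mem_insert.1 (heq ▸ mem_insert_self v₂ T₂)).resolve_right (hnotMem v₂ hv₂ T₁ hT₁)
    rw [← erase_insert (hnotMem v₂ hv₁ T₁ hT₁), heq, erase_insert (hnotMem v₂ hv₂ T₂ hT₂)]
  · intro T hT
    obtain ⟨v, hvT, hv⟩ := (mem_filter.1 hT).2.2 i₀ hi₀
    have hvω := mem_skewClass.2 hv
    refine ⟨(v, T.erase v), mem_product.2 ⟨hvω, mem_filter.2 ⟨mem_univ _, ?_⟩⟩, insert_erase hvT⟩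
    rw [← hinsert v hvω _ (notMem_erase v T), insert_erase hvT]
    exact (mem_filter.1 hT).2

theorem exists_circuit_subset {ρ : Finset U → ℕ} {S : Finset U} (hS : Subtransversal cls S)
    (h : ρ S < S.card) : ∃ C ⊆ S, Circuit cls ρ C := by
  obtain ⟨C, hCS, hC⟩ := exists_minimal_le_of_wellFoundedLT (fun C => ρ C < C.card) S h
  exact ⟨C, hCS, hS.subset hCS, hC.1, fun D hD => hC.not_prop_of_lt hD⟩

theorem circuit_congr {ρ σ : Finset U → ℕ} {C : Finset U} (h : ∀ D ⊆ C, ρ D = σ D) :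
    Circuit cls ρ C ↔ Circuit cls σ C := by
  unfold Circuit
  rw [h C subset_rfl]
  refine and_congr_right fun _ => and_congr_right fun _ => forall₂_congr fun D hD => ?_
  rw [h D hD.subset]

end Transversals

section Rank
variable [DecidableEq U] {cls : U → ι}

/-- Minors are modelled on the same carrier: the axioms are only required on the skew classes in
`J`, and contracting `v` keeps `U` and removes the class of `v` from `J`. -/
structure IsMultimatroidOn (cls : U → ι) (J : Finset ι) (ρ : Finset U → ℕ) : Prop where
  rank_empty : ρ ∅ = 0
  rank_le_card : ∀ S, SubtransversalOn cls J S → ρ S ≤ S.card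
  mono : ∀ S T, SubtransversalOn cls J T → S ⊆ T → ρ S ≤ ρ T
  submod : ∀ S T, SubtransversalOn cls J (S ∪ T) → ρ (S ∪ T) + ρ (S ∩ T) ≤ ρ S + ρ T
  axiomR2 : ∀ S x y, SubtransversalOn cls J S → cls x ∈ J → cls x = cls y → x ≠ y →
    (∀ u ∈ S, cls u ≠ cls x) → 2 * ρ S + 1 ≤ ρ (insert x S) + ρ (insert y S)

def contractRank (ρ : Finset U → ℕ) (v : U) (S : Finset U) : ℕ := ρ (insert v S) - ρ {v}

namespace IsMultimatroidOn
variable {J : Finset ι} {ρ : Finset U → ℕ}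

theorem of_isMultimatroid [Fintype ι] {r : Finset U → ℕ} (hM : IsMultimatroid cls r) :
    IsMultimatroidOn cls univ r where
  rank_empty := by simpa using hM.rank_le_card ∅ (by simp [Subtransversal])
  rank_le_card S hS := hM.rank_le_card S hS.1
  mono S T hT := hM.mono S T hT.1
  submod S T h := hM.submod S T h.1
  axiomR2 S x y hS _ := hM.axiomR2 S x y hS.1

theorem restrict (hρ : IsMultimatroidOn cls J ρ) {J' : Finset ι} (h : J' ⊆ J) :
    IsMultimatroidOn cls J' ρ where
  rank_empty := hρ.rank_empty
  rank_le_card S hS := hρ.rank_le_card S (hS.mono h)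
  mono S T hT := hρ.mono S T (hT.mono h)
  submod S T hST := hρ.submod S T (hST.mono h)
  axiomR2 S x y hS hx := hρ.axiomR2 S x y (hS.mono h) (h hx)

theorem rank_insert_le_add (hρ : IsMultimatroidOn cls J ρ) {S : Finset U} {v : U}
    (h : SubtransversalOn cls J (insert v S)) : ρ (insert v S) ≤ ρ {v} + ρ S := by
  by_cases hvS : v ∈ S
  · rw [insert_eq_of_mem hvS]
    omega
  · have := hρ.submod {v} S (by rwa [← insert_eq])
    rwa [← insert_eq, singleton_inter_of_notMem hvS, hρ.rank_empty, add_zero] at this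

theorem rank_singleton_le (hρ : IsMultimatroidOn cls J ρ) {v : U} (hv : cls v ∈ J) :
    ρ {v} ≤ 1 := by
  simpa using hρ.rank_le_card {v} (subtransversalOn_empty.insert hv (by simp))

theorem rank_insert_le (hρ : IsMultimatroidOn cls J ρ) {S : Finset U} {v : U}
    (h : SubtransversalOn cls J (insert v S)) : ρ (insert v S) ≤ ρ S + 1 := by
  have := hρ.rank_singleton_le (h.2 v (mem_insert_self v S))
  have := hρ.rank_insert_le_add h
  omega

theorem rank_eq_card_of_subset (hρ : IsMultimatroidOn cls J ρ) {S T : Finset U}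
    (hT : SubtransversalOn cls J T) (hTind : ρ T = T.card) (h : S ⊆ T) : ρ S = S.card := by
  have hsub := hρ.submod S (T \ S) (by rwa [union_sdiff_of_subset h])
  rw [union_sdiff_of_subset h, inter_sdiff_self, hρ.rank_empty] at hsub
  have := hρ.rank_le_card (T \ S) (hT.subset sdiff_subset)
  have := hρ.rank_le_card S (hT.subset h)
  have := card_sdiff_add_card_eq_card h
  omega

theorem rank_lt_card_of_subset (hρ : IsMultimatroidOn cls J ρ) {S T : Finset U}
    (hT : SubtransversalOn cls J T) (hS : ρ S < S.card) (h : S ⊆ T) : ρ T < T.card := by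
  by_contra hT'
  have := hρ.rank_eq_card_of_subset hT (le_antisymm (hρ.rank_le_card T hT) (not_lt.1 hT')) h
  omega

theorem rank_insert_of_loop (hρ : IsMultimatroidOn cls J ρ) {S : Finset U} {m : U}
    (hm0 : ρ {m} = 0) (h : SubtransversalOn cls J (insert m S)) : ρ (insert m S) = ρ S := by
  have := hρ.rank_insert_le_add h
  have := hρ.mono S _ h (subset_insert m S)
  omega

/-- Axiom (R2) against a loop `m` of the same class forces `v` to raise the rank. -/
theorem rank_insert_of_loop_of_ne (hρ : IsMultimatroidOn cls J ρ) {S : Finset U} {m v : U}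
    (hm0 : ρ {m} = 0) (hvm : cls v = cls m) (hne : v ≠ m) (hvJ : cls v ∈ J)
    (hS : SubtransversalOn cls J S) (hSv : ∀ u ∈ S, cls u ≠ cls v) :
    ρ (insert v S) = ρ S + 1 := by
  have hR2 := hρ.axiomR2 S v m hS hvJ hvm hne hSv
  rw [hρ.rank_insert_of_loop hm0 (hS.insert (hvm ▸ hvJ) (hvm ▸ hSv))] at hR2
  have := hρ.rank_insert_le (hS.insert hvJ hSv)
  omega

theorem rank_singleton_of_loop_of_ne (hρ : IsMultimatroidOn cls J ρ) {m v : U}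
    (hm0 : ρ {m} = 0) (hvm : cls v = cls m) (hne : v ≠ m) (hvJ : cls v ∈ J) : ρ {v} = 1 := by
  simpa [hρ.rank_empty] using
    hρ.rank_insert_of_loop_of_ne hm0 hvm hne hvJ subtransversalOn_empty (by simp)

theorem eq_of_rank_insert_lt (hρ : IsMultimatroidOn cls J ρ) {Y : Finset U} {u₁ u₂ : U}
    (hY : SubtransversalOn cls J Y) (hYind : ρ Y = Y.card) (hu₁J : cls u₁ ∈ J)
    (h12 : cls u₁ = cls u₂) (hYu : ∀ u ∈ Y, cls u ≠ cls u₁)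
    (hd₁ : ρ (insert u₁ Y) < (insert u₁ Y).card) (hd₂ : ρ (insert u₂ Y) < (insert u₂ Y).card) :
    u₁ = u₂ := by
  by_contra hne
  have hR2 := hρ.axiomR2 Y u₁ u₂ hY hu₁J h12 hne hYu
  rw [card_insert_of_notMem fun h => hYu u₁ h rfl] at hd₁
  rw [card_insert_of_notMem fun h => hYu u₂ h h12.symm] at hd₂
  omega

theorem contract [DecidableEq ι] (hρ : IsMultimatroidOn cls J ρ) {v : U} (hvJ : cls v ∈ J) :
    IsMultimatroidOn cls (J.erase (cls v)) (contractRank ρ v) := by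
  have hv : ∀ S, SubtransversalOn cls (J.erase (cls v)) S → ρ {v} ≤ ρ (insert v S) :=
    fun S hS => hρ.mono _ _ (subtransversalOn_insert_of_erase hS hvJ) (by simp)
  refine ⟨by simp [contractRank], fun S hS => ?_, fun S T hT hST => ?_, fun S T hST => ?_,
    fun S x y hS hxJ hxy hne hSx => ?_⟩ <;> simp only [contractRank]
  · have := hρ.rank_insert_le_add (subtransversalOn_insert_of_erase hS hvJ)
    have := hρ.rank_le_card S (hS.mono (erase_subset _ _))
    omega
  · have := hρ.mono _ _ (subtransversalOn_insert_of_erase hT hvJ) (insert_subset_insert v hST)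
    omega
  · have := hρ.submod (insert v S) (insert v T)
      (by rw [← insert_union_distrib]; exact subtransversalOn_insert_of_erase hST hvJ)
    rw [← insert_union_distrib, ← insert_inter_distrib] at this
    have := hv _ hST
    have := hv (S ∩ T) (hST.subset (inter_subset_left.trans subset_union_left))
    have := hv S (hST.subset subset_union_left)
    have := hv T (hST.subset subset_union_right)
    omega
  · have hSx' : ∀ u ∈ insert v S, cls u ≠ cls x := by
      intro u hu
      rcases mem_insert.1 hu with rfl | hu
      · exact fun h => (mem_erase.1 hxJ).1 h.symm
      · exact hSx u hu
    have := hρ.axiomR2 _ x y (subtransversalOn_insert_of_erase hS hvJ) (mem_of_mem_erase hxJ)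
      hxy hne hSx'
    rw [insert_comm x, insert_comm y] at this
    have := hv _ hS
    have := hv _ (hS.insert hxJ hSx)
    have := hv _ (hS.insert (hxy ▸ hxJ) (hxy ▸ hSx))
    omega

theorem contractRank_eq_of_loop [DecidableEq ι] (hρ : IsMultimatroidOn cls J ρ) {m v : U}
    (hm0 : ρ {m} = 0) (hvm : cls v = cls m) (hvJ : cls v ∈ J) {S : Finset U}
    (hS : SubtransversalOn cls (J.erase (cls v)) S) : contractRank ρ v S = ρ S := by
  unfold contractRank
  by_cases hne : v = m
  · subst hne
    rw [hρ.rank_insert_of_loop hm0 (subtransversalOn_insert_of_erase hS hvJ), hm0, Nat.sub_zero]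
  · rw [hρ.rank_insert_of_loop_of_ne hm0 hvm hne hvJ (hS.mono (erase_subset _ _))
      fun u hu => (mem_erase.1 (hS.2 u hu)).1, hρ.rank_singleton_of_loop_of_ne hm0 hvm hne hvJ,
      Nat.add_sub_cancel]

theorem contract_add_one (hρ : IsMultimatroidOn cls J ρ) {S : Finset U} {v : U}
    (hv1 : ρ {v} = 1) (h : SubtransversalOn cls J (insert v S)) :
    contractRank ρ v S + 1 = ρ (insert v S) := by
  have := hρ.mono {v} _ h (by simp)
  simp only [contractRank]
  omega

theorem exists_mem_skewClass_of_rank_lt [Fintype U] [DecidableEq ι]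
    (hρ : IsMultimatroidOn cls J ρ) {S I : Finset U} {i : ι} (hI : SubtransversalOn cls J I)
    (hIind : ρ I = I.card) (hS : ρ S < S.card)
    (hSI : S \ skewClass cls i ⊆ I) : ∃ m ∈ S, cls m = i := by
  by_contra! h
  have hsub : S ⊆ I := fun u hu => hSI (mem_sdiff.2 ⟨hu, mem_skewClass.not.2 (h u hu)⟩)
  have := hρ.rank_eq_card_of_subset hI hIind hsub
  omega

end IsMultimatroidOn

end Rank

section Activity
variable [DecidableEq U] [Fintype U] [DecidableEq ι] {cls : U → ι}
  {J : Finset ι} {ρ σ : Finset U → ℕ} {B : Finset U} {i : ι}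

/-- The paper's `B̲_ω` is the element of the fundamental circuit `C(B, ω)` outside `B`; it is
characterised here, without circuits, as the `u ∈ ω` for which `(B - ω) + u` is dependent. -/
def IsLowerElt (cls : U → ι) (ρ : Finset U → ℕ) (B : Finset U) (i : ι) (u : U) : Prop :=
  cls u = i ∧ ρ (insert u (B \ skewClass cls i)) < (insert u (B \ skewClass cls i)).card

noncomputable def lowerElt (cls : U → ι) (ρ : Finset U → ℕ) (B : Finset U) (i : ι) (d : U) :
    U :=
  if h : ∃ u, IsLowerElt cls ρ B i u then h.choose else d

theorem lowerElt_eq (hρ : IsMultimatroidOn cls J ρ) {u d : U} (hB : SubtransversalOn cls J B)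
    (hBind : ρ B = B.card) (hi : i ∈ J) (hu : IsLowerElt cls ρ B i u) :
    lowerElt cls ρ B i d = u := by
  have hex : ∃ u, IsLowerElt cls ρ B i u := ⟨u, hu⟩
  rw [lowerElt, dif_pos hex]
  obtain ⟨hci, hdep⟩ := hex.choose_spec
  have hY : ∀ w ∈ B \ skewClass cls i, cls w ≠ cls hex.choose := fun w hw => by
    rw [hci]
    exact mem_skewClass.not.1 (mem_sdiff.1 hw).2
  exact hρ.eq_of_rank_insert_lt (hB.subset sdiff_subset)
    (hρ.rank_eq_card_of_subset hB hBind sdiff_subset) (by rw [hci]; exact hi)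
    (hci.trans hu.1.symm) hY hdep hu.2

theorem isLowerElt_insert_iff {u v : U} (hv1 : ρ {v} = 1) (hvB : v ∉ B) (hiv : i ≠ cls v) :
    IsLowerElt cls ρ (insert v B) i u ↔ IsLowerElt cls (contractRank ρ v) B i u := by
  unfold IsLowerElt contractRank
  refine and_congr_right fun hu => ?_
  have hvX : v ∉ insert u (B \ skewClass cls i) := by
    rw [mem_insert, mem_sdiff, not_or]
    exact ⟨by rintro rfl; exact hiv hu.symm, fun h => hvB h.1⟩
  rw [insert_sdiff_of_notMem _ (mem_skewClass.not.2 hiv.symm), insert_comm,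
    card_insert_of_notMem hvX, hv1]
  have := card_pos.2 (insert_nonempty u (B \ skewClass cls i))
  omega

theorem lowerElt_insert {v : U} (hv1 : ρ {v} = 1) (hvB : v ∉ B) (hiv : i ≠ cls v) (d : U) :
    lowerElt cls ρ (insert v B) i d = lowerElt cls (contractRank ρ v) B i d := by
  have : IsLowerElt cls ρ (insert v B) i = IsLowerElt cls (contractRank ρ v) B i :=
    funext fun u => propext (isLowerElt_insert_iff hv1 hvB hiv)
  rw [lowerElt, lowerElt, this]

theorem lowerElt_congr (hB : SubtransversalOn cls J B) (hi : i ∈ J)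
    (h : ∀ S, SubtransversalOn cls J S → ρ S = σ S) (d : U) :
    lowerElt cls ρ B i d = lowerElt cls σ B i d := by
  have : IsLowerElt cls ρ B i = IsLowerElt cls σ B i := by
    refine funext fun u => propext (and_congr_right fun hu => ?_)
    rw [h _ ((hB.subset sdiff_subset).insert (hu ▸ hi)
      fun w hw => hu ▸ mem_skewClass.not.1 (mem_sdiff.1 hw).2)]
  rw [lowerElt, lowerElt, this]

variable [LinearOrder ι]

theorem active_congr (hB : SubtransversalOn cls J B) (hi : i ∈ J)
    (h : ∀ S, SubtransversalOn cls J S → ρ S = σ S) :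
    Active cls ρ B i ↔ Active cls σ B i := by
  have key : ∀ C, Subtransversal cls C → C \ skewClass cls i ⊆ B → ∀ D ⊆ C, ρ D = σ D :=
    fun C hC hCB D hD => h D ((SubtransversalOn.of_sdiff_subset hC hCB hB hi).subset hD)
  exact exists_congr fun C =>
    ⟨fun ⟨hC, hrest⟩ => ⟨(circuit_congr (key C hC.1 hrest.1)).1 hC, hrest⟩,
      fun ⟨hC, hrest⟩ => ⟨(circuit_congr (key C hC.1 hrest.1)).2 hC, hrest⟩⟩

/-- A circuit whose least class is the top class lies inside that class, so it is a loop. -/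
theorem active_max_iff (hρ : IsMultimatroidOn cls J ρ) {i₀ : ι} (hi₀ : i₀ ∈ J)
    (hmax : ∀ j ∈ J, j ≤ i₀) (hB : SubtransversalOn cls J B) :
    Active cls ρ B i₀ ↔ ∃ m, cls m = i₀ ∧ ρ {m} = 0 := by
  constructor
  · rintro ⟨C, hC, hCB, m, hmC, hmi, hmin⟩
    have hCJ := SubtransversalOn.of_sdiff_subset hC.1 hCB hB hi₀
    have hCm : C = {m} := eq_singleton_iff_unique_mem.2 ⟨hmC, fun y hy =>
      hC.1 hy hmC ((le_antisymm (hmax _ (hCJ.2 y hy)) (hmin y hy)).trans hmi.symm)⟩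
    have := hC.2.1
    rw [hCm, card_singleton] at this
    exact ⟨m, hmi, by omega⟩
  · rintro ⟨m, hm, hm0⟩
    refine ⟨{m}, ⟨by simp [Subtransversal], by simp [hm0], fun D hD => ?_⟩, ?_, m,
      mem_singleton_self m, hm, by simp [hm]⟩
    · rw [ssubset_singleton_iff.1 hD, hρ.rank_empty]
      simp
    · simp [mem_skewClass, hm]

theorem active_contractRank_of_active_insert (hρ : IsMultimatroidOn cls J ρ) {v : U}
    (hvJ : cls v ∈ J) (hB : SubtransversalOn cls (J.erase (cls v)) B) (hv1 : ρ {v} = 1)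
    (hBind : contractRank ρ v B = B.card) (hi : i ∈ J.erase (cls v))
    (hact : Active cls ρ (insert v B) i) : Active cls (contractRank ρ v) B i := by
  obtain ⟨C, hC, hCB, -, -, -, hmin⟩ := hact
  have hDB : C.erase v \ skewClass cls i ⊆ B := fun y hy => by
    obtain ⟨hyC, hyi⟩ := mem_sdiff.1 hy
    obtain ⟨hyv, hyC⟩ := mem_erase.1 hyC
    exact (mem_insert.1 (hCB (mem_sdiff.2 ⟨hyC, hyi⟩))).resolve_left hyv
  have hD : SubtransversalOn cls (J.erase (cls v)) (C.erase v) :=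
    .of_sdiff_subset (hC.1.subset (erase_subset v C)) hDB hB hi
  have hDdep : contractRank ρ v (C.erase v) < (C.erase v).card := by
    have hadd := hρ.contract_add_one hv1 (subtransversalOn_insert_of_erase hD hvJ)
    have := hC.2.1
    by_cases hvC : v ∈ C
    · rw [insert_erase hvC] at hadd
      have := card_erase_add_one hvC
      omega
    · rw [erase_eq_of_notMem hvC] at hadd hD ⊢
      have := hρ.rank_insert_le (subtransversalOn_insert_of_erase hD hvJ)
      omega
  obtain ⟨C', hC'D, hC'⟩ := exists_circuit_subset hD.1 hDdep
  have hC'B : C' \ skewClass cls i ⊆ B := (sdiff_subset_sdiff hC'D subset_rfl).trans hDB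
  obtain ⟨m', hm'C', hm'i⟩ :=
    (hρ.contract hvJ).exists_mem_skewClass_of_rank_lt hB hBind hC'.2.1 hC'B
  exact ⟨C', hC', hC'B, m', hm'C', hm'i, fun y hy => hmin y (mem_of_mem_erase (hC'D hy))⟩

theorem active_insert_of_active_contractRank (hρ : IsMultimatroidOn cls J ρ) {v : U}
    (hvJ : cls v ∈ J) (hmax : ∀ j ∈ J, j ≤ cls v) (hB : SubtransversalOn cls (J.erase (cls v)) B)
    (hv1 : ρ {v} = 1) (hBind : contractRank ρ v B = B.card) (hi : i ∈ J.erase (cls v))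
    (hact : Active cls (contractRank ρ v) B i) : Active cls ρ (insert v B) i := by
  obtain ⟨C', hC', hC'B, -, -, -, hmin'⟩ := hact
  have hC'J : SubtransversalOn cls (J.erase (cls v)) C' := .of_sdiff_subset hC'.1 hC'B hB hi
  have hD : SubtransversalOn cls J (insert v C') := subtransversalOn_insert_of_erase hC'J hvJ
  have hDdep : ρ (insert v C') < (insert v C').card := by
    rw [← hρ.contract_add_one hv1 hD, card_insert_of_notMem hC'J.notMem_of_erase]
    exact Nat.add_lt_add_right hC'.2.1 1
  obtain ⟨C, hCD, hC⟩ := exists_circuit_subset hD.1 hDdep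
  have hCB : C \ skewClass cls i ⊆ insert v B := fun y hy => by
    obtain ⟨hyC, hyi⟩ := mem_sdiff.1 hy
    rcases mem_insert.1 (hCD hyC) with rfl | hy'
    · exact mem_insert_self _ _
    · exact mem_insert_of_mem (hC'B (mem_sdiff.2 ⟨hy', hyi⟩))
  have hBv : SubtransversalOn cls J (insert v B) := subtransversalOn_insert_of_erase hB hvJ
  have hBvind : ρ (insert v B) = (insert v B).card := by
    rw [← hρ.contract_add_one hv1 hBv, hBind, card_insert_of_notMem hB.notMem_of_erase]
  obtain ⟨m, hmC, hmi⟩ := hρ.exists_mem_skewClass_of_rank_lt hBv hBvind hC.2.1 hCB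
  refine ⟨C, hC, hCB, m, hmC, hmi, fun y hy => ?_⟩
  rcases mem_insert.1 (hCD hy) with rfl | hy'
  · exact hmax i (mem_of_mem_erase hi)
  · exact hmin' y hy'

end Activity

section Expansion
variable [Fintype U] {cls : U → ι} {J : Finset ι} {ρ σ : Finset U → ℕ} {R : Type} [Field R]
  (x : U → R) (t : R)

noncomputable def transitionSum (cls : U → ι) (J : Finset ι) (ρ : Finset U → ℕ) (x : U → R)
    (t : R) : R :=
  ∑ T ∈ transversalsOn cls J, t ^ (T.card - ρ T) * ∏ u ∈ T, x u

noncomputable def basesOn (cls : U → ι) (J : Finset ι) (ρ : Finset U → ℕ) : Finset (Finset U) :=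
  (transversalsOn cls J).filter fun B => ρ B = B.card

theorem transversalsOn_empty : transversalsOn cls ∅ = {(∅ : Finset U)} := by
  ext T
  simp only [transversalsOn, mem_filter, mem_univ, true_and, mem_singleton]
  constructor
  · rintro ⟨⟨-, h⟩, -⟩
    exact eq_empty_of_forall_notMem fun u hu => by simpa using h u hu
  · rintro rfl
    exact ⟨subtransversalOn_empty, by simp⟩

theorem transitionSum_empty : transitionSum cls ∅ ρ x t = 1 := by
  simp [transitionSum, transversalsOn_empty]

theorem transitionSum_congr (h : ∀ S, SubtransversalOn cls J S → ρ S = σ S) :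
    transitionSum cls J ρ x t = transitionSum cls J σ x t :=
  sum_congr rfl fun T hT => by rw [h T (mem_filter.1 hT).2.1]

variable [DecidableEq U] [DecidableEq ι]

theorem transitionSum_eq_sum_contractRank (hρ : IsMultimatroidOn cls J ρ) {i₀ : ι}
    (hi₀ : i₀ ∈ J) :
    transitionSum cls J ρ x t = ∑ v ∈ skewClass cls i₀,
      x v * t ^ (1 - ρ {v}) * transitionSum cls (J.erase i₀) (contractRank ρ v) x t := by
  rw [transitionSum, sum_transversalsOn hi₀]
  refine sum_congr rfl fun v hv => ?_
  obtain rfl : cls v = i₀ := mem_skewClass.1 hv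
  rw [transitionSum, mul_sum]
  refine sum_congr rfl fun T hT => ?_
  have hTJ : SubtransversalOn cls (J.erase (cls v)) T := (mem_filter.1 hT).2.1
  have hvT := hTJ.notMem_of_erase
  have := hρ.rank_singleton_le hi₀
  have := hρ.mono {v} _ (subtransversalOn_insert_of_erase hTJ hi₀) (by simp)
  have := (hρ.contract hi₀).rank_le_card T hTJ
  have hexp : (insert v T).card - ρ (insert v T)
      = (1 - ρ {v}) + (T.card - contractRank ρ v T) := by
    rw [card_insert_of_notMem hvT]
    unfold contractRank at *
    omega
  rw [hexp, pow_add, prod_insert hvT]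
  ring

variable [LinearOrder ι]

noncomputable def activityFactor (cls : U → ι) (ρ : Finset U → ℕ) (x : U → R) (t : R)
    (B : Finset U) (u : U) : R :=
  if Active cls ρ B (cls u) then
    t * x (lowerElt cls ρ B (cls u) u) / (((skewClass cls (cls u)).card : R) - 1) + x u
  else x u

noncomputable def activitiesSum (cls : U → ι) (J : Finset ι) (ρ : Finset U → ℕ) (x : U → R)
    (t : R) : R :=
  ∑ B ∈ basesOn cls J ρ, ∏ u ∈ B, activityFactor cls ρ x t B u

theorem activitiesSum_empty (h : ρ ∅ = 0) : activitiesSum cls ∅ ρ x t = 1 := by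
  rw [activitiesSum, basesOn, transversalsOn_empty, filter_singleton, if_pos (by simp [h])]
  simp

theorem activitiesSum_congr (h : ∀ S, SubtransversalOn cls J S → ρ S = σ S) :
    activitiesSum cls J ρ x t = activitiesSum cls J σ x t := by
  have hbases : basesOn cls J ρ = basesOn cls J σ :=
    filter_congr fun B hB => by rw [h B (mem_filter.1 hB).2.1]
  rw [activitiesSum, activitiesSum, hbases]
  refine sum_congr rfl fun B hB => prod_congr rfl fun u hu => ?_
  have hBJ : SubtransversalOn cls J B := (mem_filter.1 (mem_filter.1 hB).1).2.1
  have hu : cls u ∈ J := hBJ.2 u hu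
  simp only [activityFactor, active_congr hBJ hu h, lowerElt_congr hBJ hu h]

theorem activityFactor_insert (hρ : IsMultimatroidOn cls J ρ) {v : U} (hvJ : cls v ∈ J)
    (hmax : ∀ j ∈ J, j ≤ cls v) {B : Finset U} (hB : SubtransversalOn cls (J.erase (cls v)) B)
    (hv1 : ρ {v} = 1) (hBind : contractRank ρ v B = B.card) {u : U} (hu : u ∈ B) :
    activityFactor cls ρ x t (insert v B) u = activityFactor cls (contractRank ρ v) x t B u := by
  have hi := hB.2 u hu
  have hact : Active cls ρ (insert v B) (cls u) ↔ Active cls (contractRank ρ v) B (cls u) :=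
    ⟨active_contractRank_of_active_insert hρ hvJ hB hv1 hBind hi,
      active_insert_of_active_contractRank hρ hvJ hmax hB hv1 hBind hi⟩
  simp only [activityFactor, hact, lowerElt_insert hv1 hB.notMem_of_erase (mem_erase.1 hi).1]

theorem activitiesSum_eq_sum_contractRank (hρ : IsMultimatroidOn cls J ρ) {i₀ : ι}
    (hi₀ : i₀ ∈ J) (hmax : ∀ j ∈ J, j ≤ i₀) :
    activitiesSum cls J ρ x t = ∑ v ∈ skewClass cls i₀,
      if ρ {v} = 1 then
        ∑ B ∈ basesOn cls (J.erase i₀) (contractRank ρ v),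
          activityFactor cls ρ x t (insert v B) v *
            ∏ u ∈ B, activityFactor cls (contractRank ρ v) x t B u
      else 0 := by
  rw [activitiesSum, basesOn, sum_filter, sum_transversalsOn hi₀]
  refine sum_congr rfl fun v hv => ?_
  obtain rfl : cls v = i₀ := mem_skewClass.1 hv
  split_ifs with hv1
  · rw [basesOn, sum_filter]
    refine sum_congr rfl fun B hB => ?_
    have hBJ : SubtransversalOn cls (J.erase (cls v)) B := (mem_filter.1 hB).2.1
    have hadd := hρ.contract_add_one hv1 (subtransversalOn_insert_of_erase hBJ hi₀)
    rw [card_insert_of_notMem hBJ.notMem_of_erase]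
    by_cases hBind : contractRank ρ v B = B.card
    · rw [if_pos (by omega), if_pos hBind, prod_insert hBJ.notMem_of_erase]
      congr 1
      exact prod_congr rfl fun u hu => activityFactor_insert x t hρ hi₀ hmax hBJ hv1 hBind hu
    · rw [if_neg (by omega), if_neg hBind]
  · refine sum_eq_zero fun B hB => if_neg ?_
    have hBJ : SubtransversalOn cls (J.erase (cls v)) B := (mem_filter.1 hB).2.1
    have := hρ.rank_insert_le_add (subtransversalOn_insert_of_erase hBJ hi₀)
    have := hρ.rank_le_card B (hBJ.mono (erase_subset _ _))
    have := hρ.rank_singleton_le hi₀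
    rw [card_insert_of_notMem hBJ.notMem_of_erase]
    omega

end Expansion

theorem add_sum_erase_eq_sum_div_card_sub_one {α R : Type*} [DecidableEq α] [Field R] [CharZero R]
    {s : Finset α} {m : α} (hm : m ∈ s) (hs : 2 ≤ s.card) (a : R) (f : α → R) :
    a + ∑ v ∈ s.erase m, f v = ∑ v ∈ s.erase m, (a / ((s.card : R) - 1) + f v) := by
  have hs' : (s.card : R) - 1 ≠ 0 := by
    rw [sub_ne_zero]
    exact_mod_cast (by omega : s.card ≠ 1)
  rw [sum_add_distrib, sum_const, card_erase_of_mem hm, nsmul_eq_mul,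
    Nat.cast_pred (by omega : 0 < s.card), mul_div_cancel₀ a hs']

section Induction
variable [DecidableEq U] [Fintype U] [DecidableEq ι] [LinearOrder ι] {cls : U → ι}
  {J : Finset ι} {ρ : Finset U → ℕ} {R : Type} [Field R] (x : U → R) (t : R) {i₀ : ι}

theorem transitionSum_eq_activitiesSum_of_forall_ne_loop (hρ : IsMultimatroidOn cls J ρ)
    (hi₀ : i₀ ∈ J) (hmax : ∀ j ∈ J, j ≤ i₀) (hloop : ∀ v, cls v = i₀ → ρ {v} ≠ 0)
    (ih : ∀ v, cls v = i₀ → transitionSum cls (J.erase i₀) (contractRank ρ v) x t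
      = activitiesSum cls (J.erase i₀) (contractRank ρ v) x t) :
    transitionSum cls J ρ x t = activitiesSum cls J ρ x t := by
  rw [transitionSum_eq_sum_contractRank x t hρ hi₀,
    activitiesSum_eq_sum_contractRank x t hρ hi₀ hmax]
  refine sum_congr rfl fun v hv => ?_
  obtain rfl : cls v = i₀ := mem_skewClass.1 hv
  have hv1 : ρ {v} = 1 := le_antisymm (hρ.rank_singleton_le hi₀)
    (Nat.one_le_iff_ne_zero.2 (hloop v rfl))
  rw [if_pos hv1, hv1, Nat.sub_self, pow_zero, mul_one, ih v rfl, activitiesSum, mul_sum]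
  refine sum_congr rfl fun B hB => ?_
  have hBJ := subtransversalOn_insert_of_erase (mem_filter.1 (mem_filter.1 hB).1).2.1 hi₀
  rw [activityFactor, if_neg fun hact => ?_]
  obtain ⟨m, hm, hm0⟩ := (active_max_iff hρ hi₀ hmax hBJ).1 hact
  exact hloop m hm hm0

theorem activityFactor_insert_of_loop (hρ : IsMultimatroidOn cls J ρ) (hi₀ : i₀ ∈ J)
    (hmax : ∀ j ∈ J, j ≤ i₀) {m v : U} (hm : cls m = i₀) (hm0 : ρ {m} = 0) (hv : cls v = i₀)
    (hv1 : ρ {v} = 1) {B : Finset U} (hB : B ∈ basesOn cls (J.erase i₀) (contractRank ρ v)) :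
    activityFactor cls ρ x t (insert v B) v
      = t * x m / (((skewClass cls i₀).card : R) - 1) + x v := by
  subst hv
  obtain ⟨hBt, hBind⟩ := mem_filter.1 hB
  replace hB : SubtransversalOn cls (J.erase (cls v)) B := (mem_filter.1 hBt).2.1
  have hBv := subtransversalOn_insert_of_erase hB hi₀
  replace hBind : ρ (insert v B) = (insert v B).card := by
    rw [← hρ.contract_add_one hv1 hBv, hBind, card_insert_of_notMem hB.notMem_of_erase]
  have hact := (active_max_iff hρ hi₀ hmax hBv).2 ⟨m, hm, hm0⟩
  have hsdiff : insert v B \ skewClass cls (cls v) = B := by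
    rw [insert_sdiff_of_mem _ (mem_skewClass.2 rfl), Finset.sdiff_eq_self_iff_disjoint,
      disjoint_left]
    exact fun u hu hu' => (mem_erase.1 (hB.2 u hu)).1 (mem_skewClass.1 hu')
  have hlow : IsLowerElt cls ρ (insert v B) (cls v) m := by
    refine ⟨hm, ?_⟩
    have hmB : m ∉ B := fun h => (mem_erase.1 (hB.2 m h)).1 hm
    rw [hsdiff, hρ.rank_insert_of_loop hm0 (subtransversalOn_insert_of_erase (hm ▸ hB) (hm ▸ hi₀)),
      card_insert_of_notMem hmB]
    have := hρ.rank_le_card B (hB.mono (erase_subset _ _))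
    omega
  rw [activityFactor, if_pos hact, lowerElt_eq hρ hBv hBind hi₀ hlow]

theorem transitionSum_eq_activitiesSum_of_loop [CharZero R]
    (hk : 2 ≤ (skewClass cls i₀).card) (hρ : IsMultimatroidOn cls J ρ) (hi₀ : i₀ ∈ J)
    (hmax : ∀ j ∈ J, j ≤ i₀) {m : U} (hm : cls m = i₀) (hm0 : ρ {m} = 0)
    (ih : transitionSum cls (J.erase i₀) ρ x t = activitiesSum cls (J.erase i₀) ρ x t) :
    transitionSum cls J ρ x t = activitiesSum cls J ρ x t := by
  have hmω : m ∈ skewClass cls i₀ := mem_skewClass.2 hm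
  have hv1 : ∀ v ∈ (skewClass cls i₀).erase m, ρ {v} = 1 := fun v hv => by
    obtain ⟨hvm, hv⟩ := mem_erase.1 hv
    obtain rfl := mem_skewClass.1 hv
    exact hρ.rank_singleton_of_loop_of_ne hm0 hm.symm hvm hi₀
  have hcontract : ∀ v ∈ skewClass cls i₀, ∀ S, SubtransversalOn cls (J.erase i₀) S →
      contractRank ρ v S = ρ S := fun v hv S hS => by
    obtain rfl := mem_skewClass.1 hv
    exact hρ.contractRank_eq_of_loop hm0 hm.symm hi₀ hS
  set L := transitionSum cls (J.erase i₀) ρ x t with hL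
  have hlhs : ∀ v ∈ (skewClass cls i₀).erase m,
      x v * t ^ (1 - ρ {v}) * transitionSum cls (J.erase i₀) (contractRank ρ v) x t
        = x v * L := fun v hv => by
    rw [hv1 v hv, transitionSum_congr x t (hcontract v (mem_of_mem_erase hv)), Nat.sub_self,
      pow_zero, mul_one]
  have hrhs : ∀ v ∈ (skewClass cls i₀).erase m,
      (if ρ {v} = 1 then
        ∑ B ∈ basesOn cls (J.erase i₀) (contractRank ρ v),
          activityFactor cls ρ x t (insert v B) v *
            ∏ u ∈ B, activityFactor cls (contractRank ρ v) x t B u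
      else 0) = (t * x m / (((skewClass cls i₀).card : R) - 1) + x v) * L := by
    intro v hv
    have hvω := mem_of_mem_erase hv
    rw [if_pos (hv1 v hv), ih, ← activitiesSum_congr x t (hcontract v hvω), activitiesSum,
      mul_sum]
    exact sum_congr rfl fun B hB => by
      rw [activityFactor_insert_of_loop x t hρ hi₀ hmax hm hm0 (mem_skewClass.1 hvω) (hv1 v hv) hB]
  rw [transitionSum_eq_sum_contractRank x t hρ hi₀,
    activitiesSum_eq_sum_contractRank x t hρ hi₀ hmax, ← add_sum_erase _ _ hmω,
    ← add_sum_erase _ _ hmω, if_neg (by rw [hm0]; exact zero_ne_one), hm0,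
    transitionSum_congr x t (hcontract m hmω), ← hL, sum_congr rfl hlhs, sum_congr rfl hrhs]
  rw [zero_add, Nat.sub_zero, pow_one, ← sum_mul, ← sum_mul,
    ← add_sum_erase_eq_sum_div_card_sub_one hmω hk (t * x m)]
  ring

theorem transitionSum_eq_activitiesSum [CharZero R] (hnd : Nondegenerate cls) (J : Finset ι)
    (ρ : Finset U → ℕ) (hρ : IsMultimatroidOn cls J ρ) :
    transitionSum cls J ρ x t = activitiesSum cls J ρ x t := by
  induction J using Finset.strongInduction generalizing ρ with
  | H J ih =>
  rcases J.eq_empty_or_nonempty with rfl | hJ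
  · rw [transitionSum_empty, activitiesSum_empty x t hρ.rank_empty]
  obtain ⟨i₀, hi₀, hmax⟩ : ∃ i₀ ∈ J, ∀ j ∈ J, j ≤ i₀ :=
    ⟨J.max' hJ, J.max'_mem hJ, fun j hj => J.le_max' j hj⟩
  have hJ' : J.erase i₀ ⊂ J := erase_ssubset hi₀
  by_cases hloop : ∃ m, cls m = i₀ ∧ ρ {m} = 0
  · obtain ⟨m, hm, hm0⟩ := hloop
    exact transitionSum_eq_activitiesSum_of_loop x t (hnd _) hρ hi₀ hmax hm hm0
      (ih _ hJ' ρ (hρ.restrict (erase_subset _ _)))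
  · push Not at hloop
    refine transitionSum_eq_activitiesSum_of_forall_ne_loop x t hρ hi₀ hmax hloop fun v hv => ?_
    subst hv
    exact ih _ hJ' _ (hρ.contract hi₀)

end Induction

section Bases
variable [DecidableEq U] [Fintype U] [DecidableEq ι] [Fintype ι] {cls : U → ι}
  {r : Finset U → ℕ} {B : Finset U}

/-- Axiom (R2) lets a basis be extended into any skew class it misses. -/
theorem mmBasis_iff_mem_basesOn (hM : IsMultimatroid cls r) (hnd : Nondegenerate cls) :
    MMBasis cls r B ↔ B ∈ basesOn cls univ r := by
  have hr := IsMultimatroidOn.of_isMultimatroid hM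
  simp only [basesOn, transversalsOn, mem_filter, mem_univ, true_and]
  constructor
  · rintro ⟨⟨hsub, hind⟩, hmaxl⟩
    refine ⟨⟨⟨hsub, fun _ _ => mem_univ _⟩, fun i _ => ?_⟩, hind⟩
    by_contra! hmiss
    obtain ⟨a, ha, b, hb, hab⟩ := one_lt_card.1 (hnd i)
    rw [mem_skewClass] at ha hb
    have hBa : ∀ u ∈ B, cls u ≠ cls a := fun u hu h => hmiss u hu (h.trans ha)
    have hBb : ∀ u ∈ B, cls u ≠ cls b := fun u hu h => hmiss u hu (h.trans hb)
    have hR2 := hM.axiomR2 B a b hsub (ha.trans hb.symm) hab hBa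
    have hextend : ∀ c, (∀ u ∈ B, cls u ≠ cls c) → r (insert c B) ≠ (insert c B).card := by
      intro c hc heq
      have hcB : c ∉ B := fun h => hc c h rfl
      exact hcB (hmaxl _ ⟨hsub.insert hc, heq⟩ (subset_insert c B) ▸ mem_insert_self c B)
    have := hr.rank_le_card _ ⟨hsub.insert hBa, fun _ _ => mem_univ _⟩
    have := hr.rank_le_card _ ⟨hsub.insert hBb, fun _ _ => mem_univ _⟩
    have := hextend a hBa
    have := hextend b hBb
    rw [card_insert_of_notMem fun h => hBa a h rfl] at *
    rw [card_insert_of_notMem fun h => hBb b h rfl] at *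
    omega
  · rintro ⟨⟨⟨hsub, -⟩, hcov⟩, hind⟩
    refine ⟨⟨hsub, hind⟩, fun S hS hBS => (Subset.antisymm ?_ hBS)⟩
    intro u hu
    obtain ⟨w, hwB, hw⟩ := hcov (cls u) (mem_univ _)
    rwa [hS.1 hu (hBS hwB) hw.symm]

theorem underElt_eq_lowerElt [LinearOrder ι] {J : Finset ι} {ρ : Finset U → ℕ} {i : ι}
    (hρ : IsMultimatroidOn cls J ρ) (hB : SubtransversalOn cls J B) (hBind : ρ B = B.card)
    (hi : i ∈ J) (hact : Active cls ρ B i) (d : U) :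
    underElt cls ρ B i d = lowerElt cls ρ B i d := by
  have hex : ∃ x C, Circuit cls ρ C ∧ C ⊆ B ∪ skewClass cls i ∧ x ∈ C ∧ x ∉ B := by
    obtain ⟨C, hC, hCB, -⟩ := hact
    obtain ⟨y, hyC, hyB⟩ := not_subset.1 fun h =>
      (hρ.rank_eq_card_of_subset hB hBind h ▸ hC.2.1).false
    exact ⟨y, C, hC, sdiff_le_iff'.1 hCB, hyC, hyB⟩
  rw [underElt, dif_pos hex]
  obtain ⟨C, hC, hCB, hxC, hxB⟩ := hex.choose_spec
  have hxi : cls hex.choose = i := mem_skewClass.1 ((mem_union.1 (hCB hxC)).resolve_left hxB)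
  have hCX : C ⊆ insert hex.choose (B \ skewClass cls i) := fun y hy => by
    by_cases hyi : cls y = i
    · exact mem_insert.2 (Or.inl (hC.1 hy hxC (hyi.trans hxi.symm)))
    · have hyi' := mem_skewClass.not.2 hyi
      exact mem_insert_of_mem (mem_sdiff.2 ⟨(mem_union.1 (hCB hy)).resolve_right hyi', hyi'⟩)
  have hX : SubtransversalOn cls J (insert hex.choose (B \ skewClass cls i)) :=
    (hB.subset sdiff_subset).insert (by rw [hxi]; exact hi) fun w hw => by
      rw [hxi]
      exact mem_skewClass.not.1 (mem_sdiff.1 hw).2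
  exact (lowerElt_eq hρ hB hBind hi ⟨hxi, hρ.rank_lt_card_of_subset hX hC.2.1 hCX⟩).symm

end Bases

/-- Products over inactive (resp. active) skew classes are written as products over the elements
of `B` lying in them. -/
theorem stmt_13 {R : Type} [Field R] [CharZero R]
    [DecidableEq U] [Fintype U] [DecidableEq ι] [Fintype ι] [LinearOrder ι]
    (cls : U → ι) (r : Finset U → ℕ) (hM : IsMultimatroid cls r)
    (hnd : Nondegenerate cls) (x : U → R) (t : R) :
    ∑ T ∈ Finset.univ.filter (fun T : Finset U => Transversal cls T),
        t ^ (T.card - r T) * ∏ u ∈ T, x u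
      = ∑ B ∈ Finset.univ.filter (fun B : Finset U => MMBasis cls r B),
          (∏ u ∈ B.filter (fun u => ¬ Active cls r B (cls u)), x u) *
          ∏ u ∈ B.filter (fun u => Active cls r B (cls u)),
            (t * x (underElt cls r B (cls u) u) /
                (((skewClass cls (cls u)).card : R) - 1) + x u) := by
  have hr := IsMultimatroidOn.of_isMultimatroid hM
  have htrans : univ.filter (fun T => Transversal cls T) = transversalsOn cls univ :=
    filter_congr fun T _ => isTransversalOn_univ_iff.symm
  have hbases : univ.filter (fun B => MMBasis cls r B) = basesOn cls univ r := by
    ext B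
    rw [mem_filter, mmBasis_iff_mem_basesOn hM hnd, and_iff_right (mem_univ B)]
  rw [htrans, hbases, ← transitionSum, transitionSum_eq_activitiesSum x t hnd univ r hr]
  refine sum_congr rfl fun B hB => ?_
  obtain ⟨hBt, hBind⟩ := mem_filter.1 hB
  have hBJ := (mem_filter.1 hBt).2.1
  rw [mul_comm, ← prod_ite]
  refine prod_congr rfl fun u hu => ?_
  unfold activityFactor
  split_ifs with hact
  · rw [underElt_eq_lowerElt hr hBJ hBind (mem_univ _) hact]
  · rfl
end
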